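/- arXiv:1606.09532 — 10 statements merged into one kernel-verified Lean document; each statement's English description precedes it below -/
import Mathlib

section
/- Let p be an odd prime and g ≥ 1 an integer. For every matrix u ∈ Sp(2g,F_p) of block form u = [[V, B],[0, (Vᵀ)⁻¹]], where V ∈ GL(g,F_p) is upper triangular with all diagonal entries equal to 1 and B satisfies V·Bᵀ = B·Vᵀ, there exists a matrix M ∈ Sp(2g,ℤ) whose lower-left g×g block is zero and whose entrywise reduction modulo p equals u. (In other words, the image of the Lagrangian subgroup L(ℤ) ⊂ Sp(2g,ℤ) under the reduction map π: Sp(2g,ℤ) → Sp(2g,F_p) contains the unipotent radical U(F_p) of the finite Borel subgroup.) -/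
open Matrix

/-- The standard skew-symmetric matrix `J_g = [[0, I],[-I, 0]]` defining the
symplectic group `Sp(2g, k) = {M | Mᵀ · J_g · M = J_g}`. -/
def Jmat (g : ℕ) (k : Type*) [CommRing k] :
    Matrix (Fin g ⊕ Fin g) (Fin g ⊕ Fin g) k :=
  Matrix.fromBlocks 0 1 (-1) 0

/-- Every element `u = [[V, B],[0, (Vᵀ)⁻¹]]` of the unipotent radical `U(F_p)` of the
finite Borel subgroup of `Sp(2g, F_p)` — `V` upper triangular with unit diagonal and
`V·Bᵀ = B·Vᵀ` — lifts under entrywise reduction mod `p` to a matrix in `Sp(2g, ℤ)`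
with vanishing lower-left `g × g` block, i.e. to an element of the Lagrangian
subgroup `L(ℤ)`. -/
theorem stmt1 (p : ℕ) (hp : p.Prime) (hodd : Odd p) (g : ℕ) (hg : 1 ≤ g)
    (V B : Matrix (Fin g) (Fin g) (ZMod p))
    (hVtri : ∀ i j : Fin g, j < i → V i j = 0)
    (hVdiag : ∀ i, V i i = 1)
    (hVunit : IsUnit V)
    (hVB : V * Bᵀ = B * Vᵀ)
    (hu : (Matrix.fromBlocks V B 0 (Vᵀ)⁻¹)ᵀ * Jmat g (ZMod p) *
        Matrix.fromBlocks V B 0 (Vᵀ)⁻¹ = Jmat g (ZMod p)) :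
    ∃ M : Matrix (Fin g ⊕ Fin g) (Fin g ⊕ Fin g) ℤ,
      Mᵀ * Jmat g ℤ * M = Jmat g ℤ ∧
      (∀ i j, M (Sum.inr i) (Sum.inl j) = 0) ∧
      M.map (Int.cast : ℤ → ZMod p) = Matrix.fromBlocks V B 0 (Vᵀ)⁻¹ := by
  classical
  haveI : Fact p.Prime := ⟨hp⟩
  haveI : Fact (1 < p) := ⟨hp.one_lt⟩
  set lift : ZMod p → ℤ := fun x => (x.val : ℤ) with hliftdef
  have hlift : ∀ x : ZMod p, ((lift x : ℤ) : ZMod p) = x := by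
    intro x
    simp [lift, ZMod.natCast_val, ZMod.cast_id]
  set Vt : Matrix (Fin g) (Fin g) ℤ := V.map lift with hVt
  set St : Matrix (Fin g) (Fin g) ℤ := (V * Bᵀ).map lift with hSt
  have hVtmap : Vt.map (Int.cast : ℤ → ZMod p) = V := by
    ext i j; simp [hVt, hlift]
  have hStmap : St.map (Int.cast : ℤ → ZMod p) = V * Bᵀ := by
    ext i j; simp [hSt, hlift]
  have hVtdet : Vt.det = 1 := by
    rw [Matrix.det_of_upperTriangular (M := Vt)
      (by intro i j hij; simp [hVt, hVtri i j hij, lift])]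
    apply Finset.prod_eq_one
    intro i _
    have h : Vt i i = ((V i i).val : ℤ) := rfl
    rw [h, hVdiag, ZMod.val_one]
    norm_num
  set Dt : Matrix (Fin g) (Fin g) ℤ := (Vtᵀ)⁻¹ with hDt
  have hdetT : IsUnit (Vtᵀ).det := by
    rw [Matrix.det_transpose, hVtdet]; exact isUnit_one
  have h1 : Vtᵀ * Dt = 1 := Matrix.mul_nonsing_inv _ hdetT
  have h2 : Dt * Vtᵀ = 1 := Matrix.nonsing_inv_mul _ hdetT
  set Bt : Matrix (Fin g) (Fin g) ℤ := St * Dt with hBt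
  have hSsym : (V * Bᵀ)ᵀ = V * Bᵀ := by
    rw [Matrix.transpose_mul, Matrix.transpose_transpose, ← hVB]
  have hStsymm : Stᵀ = St := by
    rw [hSt, ← Matrix.transpose_map, hSsym]
  have hkey : Btᵀ * Dt = Dtᵀ * Bt := by
    rw [hBt, Matrix.transpose_mul, hStsymm, Matrix.mul_assoc]
  have e2 : Dtᵀ * Vt = 1 := by
    have := congrArg Matrix.transpose h1
    rwa [Matrix.transpose_mul, Matrix.transpose_transpose, Matrix.transpose_one] at this
  refine ⟨Matrix.fromBlocks Vt Bt 0 Dt, ?_, ?_, ?_⟩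
  · simp only [Jmat, Matrix.fromBlocks_transpose, Matrix.fromBlocks_multiply,
      Matrix.mul_zero, Matrix.zero_mul, Matrix.mul_one, Matrix.one_mul,
      Matrix.mul_neg, Matrix.neg_mul, Matrix.transpose_zero, add_zero, zero_add,
      neg_zero]
    rw [h1, e2, hkey]
    congr 1
    abel_nf
  · intro i j; simp [Matrix.fromBlocks]
  · have hmapmul : ∀ (A C : Matrix (Fin g) (Fin g) ℤ),
        (A * C).map (Int.cast : ℤ → ZMod p)
          = A.map (Int.cast : ℤ → ZMod p) * C.map (Int.cast : ℤ → ZMod p) := by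
      intro A C
      exact Matrix.map_mul (f := Int.castRingHom (ZMod p))
    have hmapone : (1 : Matrix (Fin g) (Fin g) ℤ).map (Int.cast : ℤ → ZMod p) = 1 := by
      exact Matrix.map_one _ (by simp) (by simp)
    have hDtmap : Dt.map (Int.cast : ℤ → ZMod p) = (Vᵀ)⁻¹ := by
      have h1' := congrArg (fun A => A.map (Int.cast : ℤ → ZMod p)) h1
      rw [hmapmul, hmapone] at h1'
      have hVTt : (Vtᵀ).map (Int.cast : ℤ → ZMod p) = Vᵀ := by
        ext i j; simp [hVt, hlift]
      rw [hVTt] at h1'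
      exact (Matrix.inv_eq_right_inv h1').symm
    have hVTdet : IsUnit (Vᵀ).det := by
      rw [Matrix.det_transpose]
      exact (Matrix.isUnit_iff_isUnit_det V).mp hVunit
    have hVTinv : Vᵀ * (Vᵀ)⁻¹ = 1 := Matrix.mul_nonsing_inv _ hVTdet
    have hBtmap : Bt.map (Int.cast : ℤ → ZMod p) = B := by
      rw [hBt, hmapmul, hStmap, hDtmap, hVB, Matrix.mul_assoc, hVTinv, Matrix.mul_one]
    rw [Matrix.fromBlocks_map, hVtmap, hBtmap, hDtmap]
    congr 1
    ext i j
    simp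
end

section
/- Let p ≥ 5 be a prime, d = (p−1)/2, and g ≥ 3. Every small admissible p-coloring σ = (a_1,…,a_g, b_1,…,b_g, c_1,…,c_{g−2}) of type (0,1), i.e. every σ ∈ C_p(g,0,1), has at least three distinct indices i ∈ {1,…,g} with a_i > 0. -/
/-- Admissibility of a triple of colors meeting at a vertex:
even sum, triangle inequalities, and sum at most `2p - 4`. -/
def AdmTriple (p i j k : ℕ) : Prop :=
  (i + j + k) % 2 = 0 ∧ i ≤ j + k ∧ j ≤ i + k ∧ k ≤ i + j ∧ i + j + k ≤ 2 * p - 4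

/-- `(a, b, cc)` is a small admissible `p`-coloring of type `(c, ε)` of the lollipop
tree `G_g`.  The relevant indices are `a i`, `b i` for `1 ≤ i ≤ g` (the `i`-th stick
edge has color `2 * a i` and the `i`-th loop edge has color `a i + b i`) and `cc j`
for `1 ≤ j ≤ g - 2` (the colors of the internal edges of the spine). -/
def IsSmallAdmissible (p g c ε : ℕ) (a b cc : ℕ → ℕ) : Prop :=
  -- (1) admissibility at the `g - 1` trivalent vertices of the spine:
  -- the triples `(2a_1, 2a_2, c_1)`, `(c_{j-1}, 2a_{j+1}, c_j)` for `2 ≤ j ≤ g-2`,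
  -- and `(c_{g-2}, 2a_g, 2c)` are admissible
  (∀ j, 1 ≤ j → j ≤ g - 1 →
      AdmTriple p (if j = 1 then 2 * a 1 else cc (j - 1)) (2 * a (j + 1))
        (if j ≤ g - 2 then cc j else 2 * c)) ∧
  -- (2) admissibility at the trivalent vertex of each lollipop
  (∀ i, 1 ≤ i → i ≤ g → 2 * (a i + b i) + 2 * a i ≤ 2 * p - 4) ∧
  -- (3) all colors are at most `p - 2`
  (∀ i, 1 ≤ i → i ≤ g → 2 * a i ≤ p - 2 ∧ a i + b i ≤ p - 2) ∧
  (∀ j, 1 ≤ j → j ≤ g - 2 → cc j ≤ p - 2) ∧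
  2 * c ≤ p - 2 ∧
  -- (4) the coloring has type `(c, ε)`
  (c + ∑ i ∈ Finset.Icc 1 g, a i) ≡ ε [MOD 2] ∧
  -- (5) smallness
  (∀ i, 1 ≤ i → i ≤ g → a i + b i ≤ (p - 1) / 2 - 1)

/-- Every small admissible `p`-coloring of type `(0, 1)` has at least three distinct
indices `i ∈ {1, …, g}` with `a i > 0`. -/
theorem stmt7 (p d g : ℕ) (hp : p.Prime) (hp5 : 5 ≤ p) (hd : d = (p - 1) / 2)
    (hg : 3 ≤ g)
    (a b cc : ℕ → ℕ) (hσ : IsSmallAdmissible p g 0 1 a b cc) :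
    ∃ i j k, i ≠ j ∧ i ≠ k ∧ j ≠ k ∧ 1 ≤ i ∧ i ≤ g ∧ 1 ≤ j ∧ j ≤ g ∧ 1 ≤ k ∧ k ≤ g ∧
      0 < a i ∧ 0 < a j ∧ 0 < a k := by
  classical
  obtain ⟨hspine, -, -, -, -, htype, -⟩ := hσ
  have hsum : (∑ i ∈ Finset.Icc 1 g, a i) % 2 = 1 := by
    have h := htype
    simp only [Nat.ModEq, zero_add] at h
    omega
  -- chain lemma: if at most one positive index (namely possibly m) up to j+1,
  -- then cc j = 2 * partial sum
  have L1 : ∀ m j, 1 ≤ j → j ≤ g - 2 →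
      (∀ i, 1 ≤ i → i ≤ j + 1 → i ≠ m → a i = 0) →
      cc j = 2 * ∑ i ∈ Finset.Icc 1 (j + 1), a i := by
    intro m j
    induction j with
    | zero => intro h; omega
    | succ n ih =>
      intro _ hle hz
      have hT := hspine (n + 1) (by omega) (by omega)
      rw [if_pos (by omega : n + 1 ≤ g - 2)] at hT
      have hIcc : Finset.Icc 1 (n + 1 + 1) = insert (n + 1 + 1) (Finset.Icc 1 (n + 1)) :=
        (Finset.insert_Icc_right_eq_Icc_add_one (by omega)).symm
      have hsplit : ∑ i ∈ Finset.Icc 1 (n + 1 + 1), a i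
          = (∑ i ∈ Finset.Icc 1 (n + 1), a i) + a (n + 1 + 1) := by
        rw [hIcc, Finset.sum_insert (by simp)]

        ring
      rcases Nat.eq_zero_or_pos n with hn | hn
      · -- base case j = 1
        subst hn
        rw [if_pos rfl] at hT
        obtain ⟨-, h1, h2, h3, -⟩ := hT
        have hz12 : a 1 = 0 ∨ a (0 + 1 + 1) = 0 := by
          by_cases h1m : (1 : ℕ) = m
          · right; exact hz (0 + 1 + 1) (by omega) (by omega) (by omega)
          · left; exact hz 1 (by omega) (by omega) h1m
        rw [hsplit]
        have hone : ∑ i ∈ Finset.Icc 1 (0 + 1), a i = a 1 := by simp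
        rw [hone]
        rcases hz12 with h | h <;> omega
      · -- inductive step
        rw [if_neg (by omega : ¬ n + 1 = 1)] at hT
        have hd1 : n + 1 - 1 = n := by omega
        rw [hd1] at hT
        obtain ⟨-, h1, h2, h3, -⟩ := hT
        have hzn : ∀ i, 1 ≤ i → i ≤ n + 1 → i ≠ m → a i = 0 := fun i hi1 hi2 hi3 =>
          hz i hi1 (by omega) hi3
        have hcn : cc n = 2 * ∑ i ∈ Finset.Icc 1 (n + 1), a i := ih hn (by omega) hzn
        by_cases hm : n + 1 + 1 = m
        · -- all earlier a's are zero
          have hS0 : ∑ i ∈ Finset.Icc 1 (n + 1), a i = 0 := by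
            apply Finset.sum_eq_zero
            intro i hi
            rw [Finset.mem_Icc] at hi
            exact hz i hi.1 (by omega) (by omega)
          rw [hsplit, hS0]
          rw [hS0] at hcn
          omega
        · have ha0 : a (n + 1 + 1) = 0 := hz _ (by omega) (by omega) hm
          rw [hsplit, ha0]
          rw [ha0] at h1 h2 h3
          omega
  have sum_single : ∀ n m, 1 ≤ m → m ≤ n →
      (∀ i, 1 ≤ i → i ≤ n → i ≠ m → a i = 0) →
      ∑ i ∈ Finset.Icc 1 n, a i = a m := by
    intro n m h1 h2 hzr
    apply Finset.sum_eq_single_of_mem m (Finset.mem_Icc.mpr ⟨h1, h2⟩)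
    intro i hi hne
    rw [Finset.mem_Icc] at hi
    exact hzr i hi.1 hi.2 hne
  -- the last spine triple gives cc (g-2) = 2 * a g
  have hlast := hspine (g - 1) (by omega) (le_refl _)
  rw [if_neg (by omega : ¬ g - 1 = 1), if_neg (by omega : ¬ g - 1 ≤ g - 2),
    (by omega : g - 1 - 1 = g - 2), (by omega : g - 1 + 1 = g)] at hlast
  obtain ⟨-, hL1, hL2, -, -⟩ := hlast
  have hlast' : cc (g - 2) = 2 * a g := by omega
  -- split off the top of the global sum
  have hsplitg : ∑ i ∈ Finset.Icc 1 g, a i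
      = (∑ i ∈ Finset.Icc 1 (g - 1), a i) + a g := by
    have hIcc : Finset.Icc 1 g = insert g (Finset.Icc 1 (g - 1)) := by
      have h := Finset.insert_Icc_right_eq_Icc_add_one (a := 1) (b := g - 1) (by omega)
      rw [(by omega : g - 1 + 1 = g)] at h
      exact h.symm
    rw [hIcc, Finset.sum_insert (by simp; omega), Nat.add_comm]
  set T := (Finset.Icc 1 g).filter (fun i => 0 < a i) with hT
  rcases Nat.lt_or_ge 2 T.card with hc | hc
  · obtain ⟨i, j, k, hi, hj, hk, hij, hik, hjk⟩ := Finset.two_lt_card_iff.mp hc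
    rw [hT, Finset.mem_filter, Finset.mem_Icc] at hi hj hk
    exact ⟨i, j, k, hij, hik, hjk, hi.1.1, hi.1.2, hj.1.1, hj.1.2, hk.1.1, hk.1.2,
      hi.2, hj.2, hk.2⟩
  exfalso
  have hzoff : ∀ i, 1 ≤ i → i ≤ g → i ∉ T → a i = 0 := by
    intro i h1 h2 hnot
    by_contra h
    exact hnot (Finset.mem_filter.mpr ⟨Finset.mem_Icc.mpr ⟨h1, h2⟩, Nat.pos_of_ne_zero h⟩)
  have hmemT : ∀ i, i ∈ T → 1 ≤ i ∧ i ≤ g ∧ 0 < a i := by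
    intro i hi
    rw [hT, Finset.mem_filter, Finset.mem_Icc] at hi
    exact ⟨hi.1.1, hi.1.2, hi.2⟩
  have hTsum : ∑ i ∈ T, a i = ∑ i ∈ Finset.Icc 1 g, a i := by
    apply Finset.sum_filter_of_ne
    intro x _ hx
    exact Nat.pos_of_ne_zero hx
  have hTne : T.Nonempty := by
    rcases Finset.eq_empty_or_nonempty T with h | h
    · rw [h] at hTsum; simp at hTsum; omega
    · exact h
  have hc1 : T.card = 1 ∨ T.card = 2 := by
    have := Finset.card_pos.mpr hTne
    omega
  rcases hc1 with hc1 | hc2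
  · -- exactly one positive index m
    obtain ⟨m, hm⟩ := Finset.card_eq_one.mp hc1
    have hmT : m ∈ T := by rw [hm]; exact Finset.mem_singleton_self m
    obtain ⟨hm1, hm2, hm3⟩ := hmemT m hmT
    have hz1 : ∀ i, 1 ≤ i → i ≤ g → i ≠ m → a i = 0 := by
      intro i h1 h2 h3
      apply hzoff i h1 h2
      rw [hm, Finset.mem_singleton]; exact h3
    have hcg : cc (g - 2) = 2 * ∑ i ∈ Finset.Icc 1 (g - 2 + 1), a i :=
      L1 m (g - 2) (by omega) (le_refl _) (fun i h1 h2 h3 => hz1 i h1 (by omega) h3)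
    rw [(by omega : g - 2 + 1 = g - 1)] at hcg
    -- cc (g-2) = 2 * S' = 2 * a g, so total sum = S' + a g = 2 a g, even
    rw [hlast'] at hcg
    omega
  · -- exactly two positive indices
    obtain ⟨x, y, hxy, hmM⟩ := Finset.card_eq_two.mp hc2
    have hxT : x ∈ T := by rw [hmM]; simp
    have hyT : y ∈ T := by rw [hmM]; simp
    obtain ⟨hx1, hx2, hx3⟩ := hmemT x hxT
    obtain ⟨hy1, hy2, hy3⟩ := hmemT y hyT
    set m := min x y with hmdef
    set M := max x y with hMdef
    have hmM' : m < M := by omega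
    have hm1 : 1 ≤ m := by omega
    have hMg : M ≤ g := by omega
    have ham : 0 < a m := by rcases min_choice x y with h | h <;> rw [hmdef, h] <;> assumption
    have haM : 0 < a M := by rcases max_choice x y with h | h <;> rw [hMdef, h] <;> assumption
    have hz2 : ∀ i, 1 ≤ i → i ≤ g → i ≠ m → i ≠ M → a i = 0 := by
      intro i h1 h2 h3 h4
      apply hzoff i h1 h2
      rw [hmM, Finset.mem_insert, Finset.mem_singleton]
      push_neg
      constructor <;> omega
    have hsumT : ∑ i ∈ Finset.Icc 1 g, a i = a m + a M := by
      rw [← hTsum, hmM, Finset.sum_pair hxy]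
      rcases min_choice x y with h | h
      · rw [hmdef, h, hMdef, max_eq_right_iff.mpr] <;> omega
      · rw [hmdef, h, hMdef, max_eq_left_iff.mpr]
        · omega
        · omega
    -- goal: show a m = a M, contradicting parity
    have key : a m = a M := by
      by_cases hMtop : M = g
      · -- M = g: chain up to g-2 sees only m
        have hcg : cc (g - 2) = 2 * ∑ i ∈ Finset.Icc 1 (g - 2 + 1), a i :=
          L1 m (g - 2) (by omega) (le_refl _)
            (fun i h1 h2 h3 => hz2 i h1 (by omega) h3 (by omega))
        rw [(by omega : g - 2 + 1 = g - 1)] at hcg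
        have hS : ∑ i ∈ Finset.Icc 1 (g - 1), a i = a m :=
          sum_single (g - 1) m hm1 (by omega)
            (fun i h1 h2 h3 => hz2 i h1 (by omega) h3 (by omega))
        rw [hS, hlast'] at hcg
        rw [← hMtop] at hcg
        omega
      · have hMlt : M ≤ g - 1 := by omega
        have hag : a g = 0 := hz2 g (by omega) (le_refl _) (by omega) (by omega)
        have hcg0 : cc (g - 2) = 0 := by rw [hlast', hag]
        -- constancy of cc from M-1 up to g-2
        have hconst : ∀ j, M - 1 ≤ j → j ≤ g - 2 → cc j = cc (M - 1) := by
          intro j hj1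
          induction j, hj1 using Nat.le_induction with
          | base => intro _; rfl
          | succ n hn ih =>
            intro hle
            have hT' := hspine (n + 1) (by omega) (by omega)
            rw [if_neg (by omega : ¬ n + 1 = 1), if_pos (by omega : n + 1 ≤ g - 2),
              (by omega : n + 1 - 1 = n)] at hT'
            have ha0 : a (n + 1 + 1) = 0 :=
              hz2 (n + 1 + 1) (by omega) (by omega) (by omega) (by omega)
            rw [ha0] at hT'
            obtain ⟨-, h1, h2, h3, -⟩ := hT'
            have : cc (n + 1) = cc n := by omega
            rw [this]
            exact ih (by omega)
        have hcM0 : cc (M - 1) = 0 := by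
          rw [← hconst (g - 2) (by omega) (le_refl _)]
          exact hcg0
        -- triple at j = M-1
        have hTm := hspine (M - 1) (by omega) (by omega)
        rw [if_pos (by omega : M - 1 ≤ g - 2), hcM0,
          (by omega : M - 1 + 1 = M)] at hTm
        by_cases hM2 : M = 2
        · rw [if_pos (by omega : M - 1 = 1)] at hTm
          obtain ⟨-, h1, h2, h3, -⟩ := hTm
          have hm1' : m = 1 := by omega
          rw [hm1']
          omega
        · rw [if_neg (by omega : ¬ M - 1 = 1), (by omega : M - 1 - 1 = M - 2)] at hTm
          have hcM2 : cc (M - 2) = 2 * ∑ i ∈ Finset.Icc 1 (M - 2 + 1), a i :=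
            L1 m (M - 2) (by omega) (by omega)
              (fun i h1 h2 h3 => hz2 i h1 (by omega) h3 (by omega))
          rw [(by omega : M - 2 + 1 = M - 1)] at hcM2
          have hS : ∑ i ∈ Finset.Icc 1 (M - 1), a i = a m :=
            sum_single (M - 1) m hm1 (by omega)
              (fun i h1 h2 h3 => hz2 i h1 (by omega) h3 (by omega))
          rw [hS] at hcM2
          obtain ⟨-, h1, h2, h3, -⟩ := hTm
          omega
    rw [hsumT, key] at hsum
    omega
end

section
/- Let p ≥ 5 be a prime, d = (p−1)/2, g ≥ 3, and 1 ≤ c ≤ d−1. There is no small admissible p-coloring σ = (a_1,…,a_g, b_1,…,b_g, c_1,…,c_{g−2}) in C_p(g,c,0) such that d−1−a_i−2b_i ≡ d−1 (mod 2d) for all 1 ≤ i ≤ g−1 and d−1−a_g−2b_g ≡ d−c+1 (mod 2d). -/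
/-- There is no small admissible `p`-coloring of type `(c, 0)` whose weight is
congruent (mod `2d`) to `d - 1` in coordinates `1, …, g-1` and to `d - c + 1` in
coordinate `g`. -/
theorem stmt9 (p d g c : ℕ) (hp : p.Prime) (hp5 : 5 ≤ p) (hd : d = (p - 1) / 2)
    (hg : 3 ≤ g) (hc1 : 1 ≤ c) (hc : c ≤ d - 1) :
    ¬ ∃ a b cc : ℕ → ℕ, IsSmallAdmissible p g c 0 a b cc ∧
      (∀ i, 1 ≤ i → i ≤ g - 1 →
        (d : ℤ) - 1 - a i - 2 * b i ≡ (d : ℤ) - 1 [ZMOD 2 * (d : ℤ)]) ∧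
      (d : ℤ) - 1 - a g - 2 * b g ≡ (d : ℤ) - c + 1 [ZMOD 2 * (d : ℤ)] := by
  rintro ⟨a, b, cc, ⟨h1, h2, h3, h4, h5, h6, h7⟩, hw, hwg⟩
  have hd2 : 2 ≤ d := by omega
  -- a_i = b_i = 0 for i ≤ g - 1
  have hab : ∀ i, 1 ≤ i → i ≤ g - 1 → a i = 0 ∧ b i = 0 := by
    intro i hi1 hi2
    have hs : a i + b i ≤ d - 1 := by rw [hd]; exact h7 i hi1 (by omega)
    have hm := (hw i hi1 hi2).dvd
    have h0 : ((d:ℤ) - 1) - ((d:ℤ) - 1 - a i - 2 * b i) = (a i : ℤ) + 2 * b i := by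
      ring
    rw [h0] at hm
    have hz := Int.eq_zero_of_abs_lt_dvd hm (by
      rw [abs_of_nonneg (by positivity)]; omega)
    constructor <;> omega
  -- a_g + 2 b_g = c - 2
  have hsg : a g + b g ≤ d - 1 := by rw [hd]; exact h7 g (by omega) le_rfl
  have hmg := hwg.dvd
  have h0g : ((d:ℤ) - c + 1) - ((d:ℤ) - 1 - a g - 2 * b g)
      = (a g : ℤ) + 2 * b g - c + 2 := by ring
  rw [h0g] at hmg
  have hzg := Int.eq_zero_of_abs_lt_dvd hmg (by rw [abs_lt]; omega)
  have hag : a g + 2 * b g + 2 = c := by omega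
  -- all spine colors are 0
  have hcc : ∀ j, 1 ≤ j → j ≤ g - 2 → cc j = 0 := by
    intro j
    induction j with
    | zero => omega
    | succ n ih =>
      intro hj1 hj2
      have htr := h1 (n + 1) (by omega) (by omega)
      rw [if_pos hj2] at htr
      have e1 : (if n + 1 = 1 then 2 * a 1 else cc (n + 1 - 1)) = 0 := by
        rcases Nat.eq_zero_or_pos n with h | h
        · subst h; rw [if_pos rfl, (hab 1 (by omega) (by omega)).1]
        · rw [if_neg (by omega)]
          simpa using ih (by omega) (by omega)
      rw [e1, (hab (n + 2) (by omega) (by omega)).1] at htr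
      obtain ⟨-, -, -, ht, -⟩ := htr
      omega
  -- the last spine triple forces a_g = c
  have htr := h1 (g - 1) (by omega) le_rfl
  rw [if_neg (by omega), if_neg (by omega), show g - 1 + 1 = g by omega] at htr
  have hcz : cc (g - 1 - 1) = 0 := hcc (g - 1 - 1) (by omega) (by omega)
  rw [hcz] at htr
  obtain ⟨-, ht1, ht2, ht3, -⟩ := htr
  omega
end

section
/- Let p ≥ 5 be a prime, d = (p−1)/2, and g ≥ 3. There is no small admissible p-coloring σ = (a_1,…,a_g, b_1,…,b_g, c_1,…,c_{g−2}) in C_p(g,d−1,0) such that d−1−a_i−2b_i ≡ d−1 (mod 2d) for all 1 ≤ i ≤ g−1 and d−1−a_g−2b_g ≡ −2 (mod 2d). -/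
lemma aux0 (D k : ℤ) (h : D ∣ k) (h1 : -D < k) (h2 : k < D) : k = 0 := by
  rcases h with ⟨m, rfl⟩
  have hD : 0 < D := by linarith
  rcases lt_trichotomy m 0 with hm | hm | hm
  · have : D * m ≤ D * (-1) := mul_le_mul_of_nonneg_left (by omega) hD.le
    rw [mul_neg_one] at this; linarith
  · simp [hm]
  · have : D * 1 ≤ D * m := mul_le_mul_of_nonneg_left (by omega) hD.le
    rw [mul_one] at this; linarith

/-- There is no small admissible `p`-coloring of type `(d-1, 0)` whose weight is
congruent (mod `2d`) to `d - 1` in coordinates `1, …, g-1` and to `-2` in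
coordinate `g`. -/
theorem stmt10 (p d g : ℕ) (hp : p.Prime) (hp5 : 5 ≤ p) (hd : d = (p - 1) / 2)
    (hg : 3 ≤ g) :
    ¬ ∃ a b cc : ℕ → ℕ, IsSmallAdmissible p g (d - 1) 0 a b cc ∧
      (∀ i, 1 ≤ i → i ≤ g - 1 →
        (d : ℤ) - 1 - a i - 2 * b i ≡ (d : ℤ) - 1 [ZMOD 2 * (d : ℤ)]) ∧
      (d : ℤ) - 1 - a g - 2 * b g ≡ -2 [ZMOD 2 * (d : ℤ)] := by
  rintro ⟨a, b, cc, ⟨h1, h2, h3, h4, h5, h6, h7⟩, hw, hwg⟩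
  have hd2 : 2 ≤ d := by omega
  -- In coordinates 1..g-1 the weight congruence forces a i = b i = 0.
  have key : ∀ i, 1 ≤ i → i ≤ g - 1 → a i = 0 ∧ b i = 0 := by
    intro i hi1 hi2
    have hsmall : a i + b i ≤ d - 1 := by
      have := h7 i hi1 (by omega); omega
    have hdvd := (hw i hi1 hi2).dvd
    have hk : ((d : ℤ) - 1 - ((d : ℤ) - 1 - a i - 2 * b i)) = 0 := by
      refine aux0 _ _ hdvd ?_ ?_ <;> push_cast <;> omega
    omega
  -- The last weight congruence forces a g + 2 * b g = d + 1.
  have hg0 : a g + 2 * b g = d + 1 := by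
    have hsmall : a g + b g ≤ d - 1 := by
      have := h7 g (by omega) le_rfl; omega
    have hdvd := hwg.dvd
    have hk : ((-2 : ℤ) - ((d : ℤ) - 1 - a g - 2 * b g)) = 0 := by
      refine aux0 _ _ hdvd ?_ ?_ <;> push_cast <;> omega
    omega
  -- All interior colors are 0.
  have hcc : ∀ j, 1 ≤ j → j ≤ g - 2 → cc j = 0 := by
    intro j
    induction j with
    | zero => omega
    | succ n ih =>
      intro _ hn2
      have ht := h1 (n + 1) (by omega) (by omega)
      rw [if_pos hn2] at ht
      have ha := (key (n + 1 + 1) (by omega) (by omega)).1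
      rcases Nat.eq_zero_or_pos n with hn0 | hn0
      · subst hn0
        rw [if_pos rfl] at ht
        have ha1 := (key 1 (by omega) (by omega)).1
        have := ht.2.2.2.1
        omega
      · rw [if_neg (by omega)] at ht
        simp only [Nat.add_sub_cancel] at ht
        have hprev := ih (by omega) (by omega)
        have := ht.2.2.2.1
        omega
  -- The triple at the last spine vertex.
  have ht := h1 (g - 1) (by omega) le_rfl
  rw [if_neg (by omega), if_neg (by omega)] at ht
  have hgg : g - 1 + 1 = g := by omega
  have hgg2 : g - 1 - 1 = g - 2 := by omega
  rw [hgg, hgg2] at ht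
  have hc2 := hcc (g - 2) (by omega) le_rfl
  have hb : a g + b g ≤ d - 1 := by
    have := h7 g (by omega) le_rfl; omega
  have := ht.2.2.2.1
  omega
end

section
/- Let p ≥ 5 be a prime, d = (p−1)/2, and g ≥ 3. There is no small admissible p-coloring σ = (a_1,…,a_g, b_1,…,b_g, c_1,…,c_{g−2}) in C_p(g,1,1) such that d−1−a_i−2b_i ≡ d−1 (mod 2d) for all 1 ≤ i ≤ g−2, d−1−a_{g−1}−2b_{g−1} ≡ d−3 (mod 2d), and d−1−a_g−2b_g ≡ d−1 (mod 2d). -/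
/-- There is no small admissible `p`-coloring of type `(1, 1)` whose weight is
congruent (mod `2d`) to `d - 1` in coordinates `1, …, g-2`, to `d - 3` in
coordinate `g-1`, and to `d - 1` in coordinate `g`. -/
theorem stmt13 (p d g : ℕ) (hp : p.Prime) (hp5 : 5 ≤ p) (hd : d = (p - 1) / 2)
    (hg : 3 ≤ g) :
    ¬ ∃ a b cc : ℕ → ℕ, IsSmallAdmissible p g 1 1 a b cc ∧
      (∀ i, 1 ≤ i → i ≤ g - 2 →
        (d : ℤ) - 1 - a i - 2 * b i ≡ (d : ℤ) - 1 [ZMOD 2 * (d : ℤ)]) ∧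
      (d : ℤ) - 1 - a (g - 1) - 2 * b (g - 1) ≡ (d : ℤ) - 3 [ZMOD 2 * (d : ℤ)] ∧
      (d : ℤ) - 1 - a g - 2 * b g ≡ (d : ℤ) - 1 [ZMOD 2 * (d : ℤ)] := by
  rintro ⟨a, b, cc, ⟨hspine, hlol, hcol, hccb, hcb, hpar, hsmall⟩, h1, h2, h3⟩
  have hd2 : 2 ≤ d := by omega
  -- weights congruent to d-1 force a_i = b_i = 0
  have hzero : ∀ i, 1 ≤ i → i ≤ g →
      ((d : ℤ) - 1 - a i - 2 * b i ≡ (d : ℤ) - 1 [ZMOD 2 * (d : ℤ)]) →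
      a i = 0 ∧ b i = 0 := by
    intro i hi1 hig hmod
    have hs : a i + b i ≤ d - 1 := by
      have := hsmall i hi1 hig; omega
    have hdvd : (2 * (d : ℤ)) ∣ ((a i : ℤ) + 2 * b i) := by
      have := hmod.dvd
      have heq : ((d : ℤ) - 1) - ((d : ℤ) - 1 - a i - 2 * b i)
          = (a i : ℤ) + 2 * b i := by ring
      rwa [heq] at this
    have hdvd' : 2 * d ∣ a i + 2 * b i := by
      have : ((2 * d : ℕ) : ℤ) ∣ ((a i + 2 * b i : ℕ) : ℤ) := by push_cast; exact hdvd
      exact_mod_cast this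
    have := Nat.eq_zero_of_dvd_of_lt hdvd' (by omega)
    omega
  have ai0 : ∀ i, 1 ≤ i → i ≤ g - 2 → a i = 0 := fun i hi1 hi2 =>
    (hzero i hi1 (by omega) (h1 i hi1 hi2)).1
  have ag0 : a g = 0 := (hzero g (by omega) le_rfl h3).1
  -- the (g-1)-st weight congruence forces a_{g-1} + 2 b_{g-1} = 2
  have hg1 : a (g - 1) + 2 * b (g - 1) = 2 := by
    have hs : a (g - 1) + b (g - 1) ≤ d - 1 := by
      have := hsmall (g - 1) (by omega) (by omega); omega
    have hdvd : (2 * (d : ℤ)) ∣ ((a (g - 1) : ℤ) + 2 * b (g - 1) - 2) := by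
      have := h2.dvd
      have heq : ((d : ℤ) - 3) - ((d : ℤ) - 1 - a (g - 1) - 2 * b (g - 1))
          = (a (g - 1) : ℤ) + 2 * b (g - 1) - 2 := by ring
      rwa [heq] at this
    obtain ⟨k, hk⟩ := hdvd
    have hub : (a (g - 1) : ℤ) + 2 * b (g - 1) - 2 ≤ 2 * d - 4 := by push_cast; omega
    have hlb : (-2 : ℤ) ≤ (a (g - 1) : ℤ) + 2 * b (g - 1) - 2 := by push_cast; omega
    have hk0 : k = 0 := by
      rcases lt_trichotomy k 0 with h | h | h
      · nlinarith
      · exact h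
      · nlinarith
    rw [hk0, mul_zero] at hk
    omega
  -- the internal spine colors up to g-3 vanish
  have cczero : ∀ j, j ≤ g - 3 → 1 ≤ j → cc j = 0 := by
    intro j
    induction j using Nat.strong_induction_on with
    | _ j ih =>
      intro hj3 hj1
      have hsp := hspine j hj1 (by omega)
      rw [if_pos (show j ≤ g - 2 by omega)] at hsp
      have ha : a (j + 1) = 0 := ai0 (j + 1) (by omega) (by omega)
      by_cases hj : j = 1
      · subst hj
        rw [if_pos rfl] at hsp
        obtain ⟨-, -, -, htri, -⟩ := hsp
        have := ai0 1 le_rfl (by omega)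
        omega
      · rw [if_neg hj] at hsp
        obtain ⟨-, -, -, htri, -⟩ := hsp
        have := ih (j - 1) (by omega) (by omega) (by omega)
        omega
  -- hence cc (g-2) = 2 a_{g-1}
  have key : cc (g - 2) = 2 * a (g - 1) := by
    have hsp := hspine (g - 2) (by omega) (by omega)
    rw [if_pos (le_refl (g - 2))] at hsp
    have hfirst : (if g - 2 = 1 then 2 * a 1 else cc (g - 2 - 1)) = 0 := by
      by_cases h : g - 2 = 1
      · rw [if_pos h]
        have := ai0 1 le_rfl (by omega); omega
      · rw [if_neg h]
        exact cczero (g - 2 - 1) (by omega) (by omega)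
    rw [hfirst, show g - 2 + 1 = g - 1 by omega] at hsp
    obtain ⟨-, -, hA, hB, -⟩ := hsp
    omega
  -- the last spine vertex gives a contradiction
  have hsp := hspine (g - 1) (by omega) (by omega)
  rw [if_neg (show ¬ g - 1 ≤ g - 2 by omega), if_neg (show g - 1 ≠ 1 by omega),
    show g - 1 - 1 = g - 2 by omega, show g - 1 + 1 = g by omega, key, ag0] at hsp
  obtain ⟨-, hA, -, hB, -⟩ := hsp
  omega
end

section
/- Let p ≥ 5 be a prime, d = (p−1)/2, and g ≥ 3. There is no small admissible p-coloring σ = (a_1,…,a_g, b_1,…,b_g, c_1,…,c_{g−2}) in C_p(g,d−1,1) such that d−1−a_i−2b_i ≡ d−1 (mod 2d) for all 1 ≤ i ≤ g−2, d−1−a_{g−1}−2b_{g−1} ≡ d−2 (mod 2d), and d−1−a_g−2b_g ≡ −2 (mod 2d). -/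
/-- If `s ≡ t` modulo `2d` and `|s - t| < 2d`, then `s = t`. -/
lemma eqmod_aux (d : ℕ) (s t : ℤ) (h : s ≡ t [ZMOD 2 * (d : ℤ)])
    (hb1 : -(2 * (d : ℤ)) < s - t) (hb2 : s - t < 2 * (d : ℤ)) : s = t := by
  obtain ⟨k, hk⟩ := h.dvd
  have hd0 : (0 : ℤ) ≤ 2 * (d : ℤ) := by positivity
  rcases lt_trichotomy k 0 with hk0 | hk0 | hk0
  · have h1 : k ≤ -1 := by omega
    have h2 := mul_le_mul_of_nonneg_left h1 hd0
    nlinarith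
  · subst hk0; simp at hk; omega
  · have h1 : (1 : ℤ) ≤ k := hk0
    have h2 := mul_le_mul_of_nonneg_left h1 hd0
    nlinarith

/-- There is no small admissible `p`-coloring of type `(d-1, 1)` whose weight is
congruent (mod `2d`) to `d - 1` in coordinates `1, …, g-2`, to `d - 2` in
coordinate `g-1`, and to `-2` in coordinate `g`. -/
theorem stmt14 (p d g : ℕ) (hp : p.Prime) (hp5 : 5 ≤ p) (hd : d = (p - 1) / 2)
    (hg : 3 ≤ g) :
    ¬ ∃ a b cc : ℕ → ℕ, IsSmallAdmissible p g (d - 1) 1 a b cc ∧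
      (∀ i, 1 ≤ i → i ≤ g - 2 →
        (d : ℤ) - 1 - a i - 2 * b i ≡ (d : ℤ) - 1 [ZMOD 2 * (d : ℤ)]) ∧
      (d : ℤ) - 1 - a (g - 1) - 2 * b (g - 1) ≡ (d : ℤ) - 2 [ZMOD 2 * (d : ℤ)] ∧
      (d : ℤ) - 1 - a g - 2 * b g ≡ -2 [ZMOD 2 * (d : ℤ)] := by
  rintro ⟨a, b, cc, ⟨h1, h2, h3, h4, h5, h6, h7⟩, hw1, hw2, hw3⟩
  -- p is odd
  have hp2 : ¬ (2 ∣ p) := by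
    intro h
    have := (Nat.prime_dvd_prime_iff_eq Nat.prime_two hp).mp h
    omega
  have hdp : 2 * d + 1 = p := by omega
  have hd2 : 2 ≤ d := by omega
  have hsmall : ∀ i, 1 ≤ i → i ≤ g → a i + b i ≤ d - 1 := by
    intro i hi1 hi2
    have := h7 i hi1 hi2
    omega
  -- coordinates 1..g-2 : a i = 0 (and b i = 0)
  have ha : ∀ i, 1 ≤ i → i ≤ g - 2 → a i = 0 := by
    intro i hi1 hi2
    have hs := hsmall i hi1 (by omega)
    have he := eqmod_aux d _ _ (hw1 i hi1 hi2) (by omega) (by omega)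
    omega
  -- coordinate g-1 : a (g-1) = 1
  have hag1 : a (g - 1) = 1 := by
    have hs := hsmall (g - 1) (by omega) (by omega)
    have he := eqmod_aux d _ _ hw2 (by omega) (by omega)
    omega
  -- coordinate g : a g + 2 * b g = d + 1, hence a g + 3 ≤ d
  have hag : a g + 3 ≤ d := by
    have hs := hsmall g (by omega) (by omega)
    have he := eqmod_aux d _ _ hw3 (by omega) (by omega)
    omega
  -- internal spine colors 1..g-3 are 0
  have hcc : ∀ j, 1 ≤ j → j + 3 ≤ g → cc j = 0 := by
    intro j
    induction j with
    | zero => omega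
    | succ n ih =>
      intro _ hj
      have ht := h1 (n + 1) (by omega) (by omega)
      rw [if_pos (show n + 1 ≤ g - 2 by omega)] at ht
      have hfirst : (if n + 1 = 1 then 2 * a 1 else cc (n + 1 - 1)) = 0 := by
        split
        · have := ha 1 (by omega) (by omega); omega
        · next h => simpa using ih (by omega) (by omega)
      rw [hfirst, ha (n + 1 + 1) (by omega) (by omega)] at ht
      obtain ⟨-, -, -, ht3, -⟩ := ht
      omega
  -- cc (g-2) = 2
  have hcg : cc (g - 2) = 2 := by
    have ht := h1 (g - 2) (by omega) (by omega)
    rw [if_pos (show g - 2 ≤ g - 2 from le_refl _)] at ht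
    have hfirst : (if g - 2 = 1 then 2 * a 1 else cc (g - 2 - 1)) = 0 := by
      split
      · have := ha 1 (by omega) (by omega); omega
      · next h => have := hcc (g - 3) (by omega) (by omega)
                  have h3 : g - 2 - 1 = g - 3 := by omega
                  rw [h3]; exact this
    have hidx : g - 2 + 1 = g - 1 := by omega
    rw [hfirst, hidx, hag1] at ht
    obtain ⟨-, -, ht2, ht3, -⟩ := ht
    omega
  -- final triple at j = g - 1 gives the contradiction
  have ht := h1 (g - 1) (by omega) (by omega)
  rw [if_neg (show ¬ (g - 1 ≤ g - 2) by omega),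
      if_neg (show ¬ (g - 1 = 1) by omega)] at ht
  have hidx1 : g - 1 - 1 = g - 2 := by omega
  have hidx2 : g - 1 + 1 = g := by omega
  rw [hidx1, hidx2, hcg] at ht
  obtain ⟨-, -, -, ht3, -⟩ := ht
  omega
end

section
/- Let p ≥ 5 be a prime, d = (p−1)/2, and g ≥ 3. There is no small admissible p-coloring σ = (a_1,…,a_g, b_1,…,b_g, c_1,…,c_{g−2}) in C_p(g,0,1) such that d−1−a_i−2b_i ≡ d−1 (mod 2d) for all 1 ≤ i ≤ g−2, d−1−a_{g−1}−2b_{g−1} ≡ d−3 (mod 2d), and d−1−a_g−2b_g ≡ d−2 (mod 2d). -/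

lemma key (d A B k : ℕ) (hd : 2 ≤ d) (hAB : A + B ≤ d - 1) (hk : k < 2 * d)
    (h : (d : ℤ) - 1 - A - 2 * B ≡ (d : ℤ) - 1 - k [ZMOD 2 * (d : ℤ)]) :
    A + 2 * B = k := by
  obtain ⟨t, ht⟩ := h.dvd
  have h1 : (A : ℤ) + 2 * B - k = 2 * (d : ℤ) * t := by push_cast at ht ⊢; linarith
  have hb : A + 2 * B ≤ 2 * d - 2 := by omega
  have hb' : (A : ℤ) + 2 * B ≤ 2 * (d : ℤ) - 2 := by omega
  have hk' : (k : ℤ) < 2 * (d : ℤ) := by exact_mod_cast hk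
  have hd' : (2 : ℤ) ≤ d := by exact_mod_cast hd
  have ht0 : t = 0 := by
    rcases lt_trichotomy t 0 with h' | h' | h'
    · have : t ≤ -1 := by omega
      nlinarith [Int.natCast_nonneg A, Int.natCast_nonneg B,
        Int.natCast_nonneg k]
    · exact h'
    · have : 1 ≤ t := by omega
      nlinarith [Int.natCast_nonneg A, Int.natCast_nonneg B,
        Int.natCast_nonneg k]
  rw [ht0, mul_zero] at h1
  have : (A : ℤ) + 2 * B = k := by linarith
  exact_mod_cast this

/-- There is no small admissible `p`-coloring of type `(0, 1)` whose weight is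
congruent (mod `2d`) to `d - 1` in coordinates `1, …, g-2`, to `d - 3` in
coordinate `g-1`, and to `d - 2` in coordinate `g`. -/
theorem stmt15 (p d g : ℕ) (hp : p.Prime) (hp5 : 5 ≤ p) (hd : d = (p - 1) / 2)
    (hg : 3 ≤ g) :
    ¬ ∃ a b cc : ℕ → ℕ, IsSmallAdmissible p g 0 1 a b cc ∧
      (∀ i, 1 ≤ i → i ≤ g - 2 →
        (d : ℤ) - 1 - a i - 2 * b i ≡ (d : ℤ) - 1 [ZMOD 2 * (d : ℤ)]) ∧
      (d : ℤ) - 1 - a (g - 1) - 2 * b (g - 1) ≡ (d : ℤ) - 3 [ZMOD 2 * (d : ℤ)] ∧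
      (d : ℤ) - 1 - a g - 2 * b g ≡ (d : ℤ) - 2 [ZMOD 2 * (d : ℤ)] := by
  rintro ⟨a, b, cc, ⟨hT, hlol, hcol, hccB, hcB, hpar, hsm⟩, h1, h2, h3⟩
  have hd2 : 2 ≤ d := by omega
  have hsm' : ∀ i, 1 ≤ i → i ≤ g → a i + b i ≤ d - 1 := by
    intro i hi1 hi2; have := hsm i hi1 hi2; omega
  have hA : ∀ i, 1 ≤ i → i ≤ g - 2 → a i = 0 ∧ b i = 0 := by
    intro i hi1 hi2
    have := key d (a i) (b i) 0 hd2 (hsm' i hi1 (by omega)) (by omega)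
      (by simpa using h1 i hi1 hi2)
    omega
  have hAg1 : a (g - 1) + 2 * b (g - 1) = 2 :=
    key d _ _ 2 hd2 (hsm' (g - 1) (by omega) (by omega)) (by omega)
      (by rw [show (d : ℤ) - 1 - (2 : ℕ) = (d : ℤ) - 3 by push_cast; ring]; exact h2)
  have hAg : a g + 2 * b g = 1 :=
    key d _ _ 1 hd2 (hsm' g (by omega) (by omega)) (by omega)
      (by rw [show (d : ℤ) - 1 - (1 : ℕ) = (d : ℤ) - 2 by push_cast; ring]; exact h3)
  have hcc0 : ∀ j, 1 ≤ j → j ≤ g - 3 → cc j = 0 := by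
    intro j
    induction j using Nat.strong_induction_on with
    | _ j ih =>
      intro hj1 hj2
      have hT' := hT j hj1 (by omega)
      rw [if_pos (by omega : j ≤ g - 2)] at hT'
      have ha : a (j + 1) = 0 := (hA (j + 1) (by omega) (by omega)).1
      by_cases hj : j = 1
      · subst hj
        rw [if_pos rfl] at hT'
        have h01 := (hA 1 (by omega) (by omega)).1
        obtain ⟨-, -, -, hk, -⟩ := hT'
        omega
      · rw [if_neg hj] at hT'
        have hprev := ih (j - 1) (by omega) (by omega) (by omega)
        obtain ⟨-, -, -, hk, -⟩ := hT'
        omega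
  have hT2 := hT (g - 2) (by omega) (by omega)
  rw [if_pos (le_refl _)] at hT2
  have e0 : g - 2 + 1 = g - 1 := by omega
  rw [e0] at hT2
  have hfst : (if g - 2 = 1 then 2 * a 1 else cc (g - 2 - 1)) = 0 := by
    split_ifs with h
    · have := (hA 1 (by omega) (by omega)).1; omega
    · have e : g - 2 - 1 = g - 3 := by omega
      rw [e]; exact hcc0 (g - 3) (by omega) (by omega)
  rw [hfst] at hT2
  have hT3 := hT (g - 1) (by omega) (by omega)
  rw [if_neg (by omega : ¬ g - 1 = 1), if_neg (by omega : ¬ g - 1 ≤ g - 2)] at hT3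
  have e1 : g - 1 - 1 = g - 2 := by omega
  have e2 : g - 1 + 1 = g := by omega
  rw [e1, e2] at hT3
  obtain ⟨-, s1, s2, s3, -⟩ := hT2
  obtain ⟨-, t1, t2, t3, -⟩ := hT3
  omega
end

section
/- Let p ≥ 5 be a prime, d = (p−1)/2, and g ≥ 3. There is no small admissible p-coloring σ = (a_1,…,a_g, b_1,…,b_g, c_1,…,c_{g−2}) in C_p(g,0,1) such that d−1−a_i−2b_i ≡ d−1 (mod 2d) for all 1 ≤ i ≤ g−3, d−1−a_{g−2}−2b_{g−2} ≡ d−2 (mod 2d), d−1−a_{g−1}−2b_{g−1} ≡ d−1 (mod 2d), and d−1−a_g−2b_g ≡ d−3 (mod 2d). -/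
lemma modeq_small16 {D x y : ℤ} (hD : 0 < D) (h : x ≡ y [ZMOD D])
    (h1 : -D < y - x) (h2 : y - x < D) : x = y := by
  obtain ⟨t, ht⟩ := h.dvd
  rcases lt_trichotomy t 0 with h' | h' | h'
  · nlinarith
  · rw [h', mul_zero] at ht; linarith
  · nlinarith

/-- There is no small admissible `p`-coloring of type `(0, 1)` whose weight is
congruent (mod `2d`) to `d - 1` in coordinates `1, …, g-3`, to `d - 2` in
coordinate `g-2`, to `d - 1` in coordinate `g-1`, and to `d - 3` in coordinate `g`. -/
theorem stmt16 (p d g : ℕ) (hp : p.Prime) (hp5 : 5 ≤ p) (hd : d = (p - 1) / 2)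
    (hg : 3 ≤ g) :
    ¬ ∃ a b cc : ℕ → ℕ, IsSmallAdmissible p g 0 1 a b cc ∧
      (∀ i, 1 ≤ i → i ≤ g - 3 →
        (d : ℤ) - 1 - a i - 2 * b i ≡ (d : ℤ) - 1 [ZMOD 2 * (d : ℤ)]) ∧
      (d : ℤ) - 1 - a (g - 2) - 2 * b (g - 2) ≡ (d : ℤ) - 2 [ZMOD 2 * (d : ℤ)] ∧
      (d : ℤ) - 1 - a (g - 1) - 2 * b (g - 1) ≡ (d : ℤ) - 1 [ZMOD 2 * (d : ℤ)] ∧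
      (d : ℤ) - 1 - a g - 2 * b g ≡ (d : ℤ) - 3 [ZMOD 2 * (d : ℤ)] := by
  rintro ⟨a, b, cc, ⟨h1, h2, h3, h3cc, h3c, h4, h5⟩, w1, w2, w3, w4⟩
  have hd2 : 2 ≤ d := by omega
  have hd2' : (2 : ℤ) ≤ (d : ℤ) := by exact_mod_cast hd2
  have hD : (0 : ℤ) < 2 * (d : ℤ) := by linarith
  -- From the weight congruences, determine `a i + 2 * b i` at each coordinate.
  have geta : ∀ i, 1 ≤ i → i ≤ g → ∀ k : ℤ, 0 ≤ k → k ≤ 2 * (d : ℤ) - 2 →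
      ((d : ℤ) - 1 - a i - 2 * b i ≡ (d : ℤ) - 1 - k [ZMOD 2 * (d : ℤ)]) →
      (a i : ℤ) + 2 * b i = k := by
    intro i hi hig k hk0 hk h
    have hs : a i + b i ≤ (p - 1) / 2 - 1 := h5 i hi hig
    have hs2 : a i + 2 * b i + 2 ≤ 2 * d := by omega
    have hs3 : (a i : ℤ) + 2 * b i + 2 ≤ 2 * (d : ℤ) := by exact_mod_cast hs2
    have hna : (0 : ℤ) ≤ (a i : ℤ) := Int.natCast_nonneg _
    have hnb : (0 : ℤ) ≤ (b i : ℤ) := Int.natCast_nonneg _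
    have := modeq_small16 hD h (by linarith) (by linarith)
    linarith
  have hz : ∀ i, 1 ≤ i → i ≤ g - 3 → a i = 0 ∧ b i = 0 := by
    intro i hi hig
    have h := geta i hi (by omega) 0 le_rfl (by linarith) (by simpa using w1 i hi hig)
    have h' : a i + 2 * b i = 0 := by exact_mod_cast h
    omega
  have ha2 : a (g - 2) = 1 ∧ b (g - 2) = 0 := by
    have h := geta (g - 2) (by omega) (by omega) 1 (by norm_num) (by linarith)
      (by rw [show (d : ℤ) - 1 - 1 = (d : ℤ) - 2 from by ring]; exact w2)
    have h' : a (g - 2) + 2 * b (g - 2) = 1 := by exact_mod_cast h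
    omega
  have ha3 : a (g - 1) = 0 ∧ b (g - 1) = 0 := by
    have h := geta (g - 1) (by omega) (by omega) 0 le_rfl (by linarith) (by simpa using w3)
    have h' : a (g - 1) + 2 * b (g - 1) = 0 := by exact_mod_cast h
    omega
  have hag : a g + 2 * b g = 2 := by
    have h := geta g (by omega) le_rfl 2 (by norm_num) (by linarith)
      (by rw [show (d : ℤ) - 1 - 2 = (d : ℤ) - 3 from by ring]; exact w4)
    exact_mod_cast h
  -- Determine the internal spine colors.
  have spine : ∀ j, 1 ≤ j → j ≤ g - 2 → cc j = if j + 4 ≤ g then 0 else 2 := by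
    intro j
    induction j using Nat.strong_induction_on with
    | _ j ih =>
      intro hj1 hj2
      have T := h1 j hj1 (by omega)
      rw [if_pos hj2] at T
      have hX : (if j = 1 then 2 * a 1 else cc (j - 1)) = if j + 3 ≤ g then 0 else 2 := by
        by_cases hj : j = 1
        · subst hj
          rw [if_pos rfl]
          by_cases hg4 : 4 ≤ g
          · rw [if_pos (by omega), (hz 1 le_rfl (by omega)).1, mul_zero]
          · rw [if_neg (by omega), show (1 : ℕ) = g - 2 from by omega, ha2.1]
        · rw [if_neg hj, ih (j - 1) (by omega) (by omega) (by omega),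
            show j - 1 + 4 = j + 3 from by omega]
      have hY : a (j + 1) = if j + 1 = g - 2 then 1 else 0 := by
        by_cases h' : j + 1 = g - 2
        · rw [if_pos h', h', ha2.1]
        · rw [if_neg h']
          by_cases h'' : j + 1 ≤ g - 3
          · exact (hz _ (by omega) h'').1
          · rw [show j + 1 = g - 1 from by omega, ha3.1]
      rw [hX, hY] at T
      unfold AdmTriple at T
      by_cases c1 : j + 4 ≤ g
      · rw [if_pos (by omega : j + 3 ≤ g), if_neg (by omega : ¬ j + 1 = g - 2)] at T
        rw [if_pos c1]
        omega
      · rw [if_neg c1]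
        by_cases c2 : j + 3 ≤ g
        · rw [if_pos c2, if_pos (by omega : j + 1 = g - 2)] at T
          omega
        · rw [if_neg c2, if_neg (by omega : ¬ j + 1 = g - 2)] at T
          omega
  -- The last spine vertex gives a contradiction.
  have T := h1 (g - 1) (by omega) le_rfl
  rw [if_neg (by omega : ¬ g - 1 = 1), if_neg (by omega : ¬ g - 1 ≤ g - 2)] at T
  rw [show g - 1 - 1 = g - 2 from by omega, show g - 1 + 1 = g from by omega] at T
  have hc2 := spine (g - 2) (by omega) le_rfl
  rw [if_neg (by omega : ¬ g - 2 + 4 ≤ g)] at hc2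
  rw [hc2] at T
  unfold AdmTriple at T
  omega
end

section
/- Let p ≥ 5 be a prime, d = (p−1)/2, and let c be an integer with 0 ≤ c ≤ d−1. Then (1/2)·(D_2^{(2c)}(p) + δ_2^{(2c)}(p)) = (1/24)·(c+1)·(p+1)·(p−2c−1)·(p−c). -/
/-- The Verlinde formula
`D_g^{(2c)}(p) = (p/4)^{g-1} · Σ_{j=1}^{d} sin(πj(2c+1)/p) · (sin(πj/p))^{1-2g}`. -/
noncomputable def Dverl (g c p : ℕ) : ℝ :=
  ((p : ℝ) / 4) ^ (g - 1) *
    ∑ j ∈ Finset.Icc 1 ((p - 1) / 2),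
      Real.sin (Real.pi * j * (2 * c + 1) / p) *
        Real.sin (Real.pi * j / p) ^ (1 - 2 * (g : ℤ))

/-- The companion formula
`δ_g^{(2c)}(p) = (-1)^c · (4^{1-g}/p) · Σ_{j=1}^{d} sin(πj(2c+1)/p) · sin(πj/p) · (cos(πj/p))^{-2g}`. -/
noncomputable def deltaVerl (g c p : ℕ) : ℝ :=
  (-1) ^ c * ((4 : ℝ) ^ (1 - (g : ℤ)) / p) *
    ∑ j ∈ Finset.Icc 1 ((p - 1) / 2),
      Real.sin (Real.pi * j * (2 * c + 1) / p) * Real.sin (Real.pi * j / p) *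
        Real.cos (Real.pi * j / p) ^ (-(2 * (g : ℤ)))

/-!
With `w = exp (2ix)` one has `1 - w = -2i sin x · e^{ix}` and `1 + w = 2 cos x · e^{ix}`, so the
summands of `D₂` and `δ₂` at `x = πj/p` are `8 Re` of `w^(c+2) / (1 - w)^3` and of
`w^(c+2) (1 - w) / (1 + w)^4`, with `w = ζ^j` for `ζ = exp (2πi/p)`. Both summands are invariant
under `j ↦ p - j`, so the half sums are halves of sums over all `p`-th roots of unity. On those
roots, the two rational functions agree with polynomials `∑_{m<p} g m z^m` whose coefficients
`g m` are cubic in `m`, so finite Fourier inversion evaluates the sums as `p · g (p - c - 2)`,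
and the claimed identity becomes a polynomial identity in `p` and `c`.
-/

open Finset Complex
open scoped Real

section PowerSums

variable {R : Type*} [CommRing R] (z : R) (n : ℕ)

theorem sum_range_id_mul_pow_mul_sub_one_sq :
    (∑ m ∈ range n, (m : R) * z ^ m) * (z - 1) ^ 2 = z ^ n * (n * (z - 1) - z) + z := by
  induction n with
  | zero => simp
  | succ n ih => rw [sum_range_succ, add_mul, ih]; push_cast; ring

theorem sum_range_sq_mul_pow_mul_sub_one_pow_three :
    (∑ m ∈ range n, (m : R) ^ 2 * z ^ m) * (z - 1) ^ 3
      = z ^ n * (n ^ 2 * (z - 1) ^ 2 + 2 * n * z * (1 - z) + z + z ^ 2) - z - z ^ 2 := by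
  induction n with
  | zero => simp
  | succ n ih => rw [sum_range_succ, add_mul, ih]; push_cast; ring

theorem sum_range_pow_three_mul_pow_mul_sub_one_pow_four :
    (∑ m ∈ range n, (m : R) ^ 3 * z ^ m) * (z - 1) ^ 4
      = z ^ n * (n ^ 3 * (z - 1) ^ 3 - 3 * n ^ 2 * z * (z - 1) ^ 2
          + 3 * n * z * (z - 1) * (z + 1) - (z + 4 * z ^ 2 + z ^ 3))
        + (z + 4 * z ^ 2 + z ^ 3) := by
  induction n with
  | zero => simp; ring
  | succ n ih => rw [sum_range_succ, add_mul, ih]; push_cast; ring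

end PowerSums

namespace IsPrimitiveRoot

variable {K : Type*} [CommRing K] [IsDomain K] {ζ : K} {n : ℕ}

theorem sum_range_pow_pow (hζ : IsPrimitiveRoot ζ n) (s : ℕ) :
    ∑ j ∈ range n, (ζ ^ j) ^ s = if n ∣ s then (n : K) else 0 := by
  simp_rw [← pow_mul, mul_comm _ s, pow_mul]
  split_ifs with h
  · simp [(hζ.pow_eq_one_iff_dvd s).2 h]
  · have hne : ζ ^ s - 1 ≠ 0 := sub_ne_zero.2 fun h' => h ((hζ.pow_eq_one_iff_dvd s).1 h')
    have := geom_sum_mul (ζ ^ s) n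
    rw [← pow_mul, mul_comm s n, pow_mul, hζ.pow_eq_one, one_pow, sub_self] at this
    exact (mul_eq_zero.1 this).resolve_right hne

theorem sum_range_pow_mul_sum_range (hζ : IsPrimitiveRoot ζ n) (g : ℕ → K) {r : ℕ}
    (hr : 0 < r) (hrn : r ≤ n) :
    ∑ j ∈ range n, (ζ ^ j) ^ r * ∑ m ∈ range n, g m * (ζ ^ j) ^ m = n * g (n - r) := by
  have hdvd : ∀ m ∈ range n, n ∣ m + r ↔ m = n - r := by
    intro m hm
    rw [mem_range] at hm
    constructor
    · rintro ⟨k, hk⟩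
      rcases k with _ | _ | k <;> [omega; omega; nlinarith]
    · rintro rfl
      exact ⟨1, by omega⟩
  calc ∑ j ∈ range n, (ζ ^ j) ^ r * ∑ m ∈ range n, g m * (ζ ^ j) ^ m
      = ∑ m ∈ range n, g m * ∑ j ∈ range n, (ζ ^ j) ^ (m + r) := by
        simp_rw [mul_sum, pow_add]
        rw [sum_comm]
        exact sum_congr rfl fun m _ => sum_congr rfl fun j _ => by ring
    _ = ∑ m ∈ range n, if m = n - r then g m * n else 0 := by
        refine sum_congr rfl fun m hm => ?_
        rw [hζ.sum_range_pow_pow, if_congr (hdvd m hm) rfl rfl]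
        split_ifs <;> simp
    _ = n * g (n - r) := by
        rw [sum_ite_eq', if_pos (mem_range.2 (by omega)), mul_comm]

end IsPrimitiveRoot

/-- The additive constant is the one making `∑_{m<p} sinCoeff p m = 0`
(see `sum_range_sinCoeff`). -/
def sinCoeff (p m : ℝ) : ℝ :=
  -3 * (p - 1) * (p - 3) - 2 * (p ^ 2 - 9 * p + 12) * m + 6 * (p - 3) * m ^ 2 - 4 * m ^ 3

def cosCoeff (p m : ℝ) : ℝ :=
  (p - 1) * (p - 3) * (p + 4) - 2 * (9 * p - 13) * m - 6 * (p - 3) * m ^ 2 + 4 * m ^ 3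

theorem sum_range_sinCoeff (p : ℝ) (n : ℕ) :
    ∑ m ∈ range n, sinCoeff p m = -n * (n + 2) * (n - p) * (n + 2 - p) := by
  induction n with
  | zero => simp
  | succ n ih => rw [sum_range_succ, ih, sinCoeff]; push_cast; ring

/-- At `z = 1` both sides are `0`: the coefficients sum to zero, and division by zero is `0`. -/
theorem sum_range_sinCoeff_mul_pow {p : ℕ} {z : ℂ} (hz : z ^ p = 1) :
    ∑ m ∈ range p, (sinCoeff p m : ℂ) * z ^ m = 24 * p / (1 - z) ^ 3 := by
  rcases eq_or_ne z 1 with rfl | hz1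
  · simp_rw [one_pow, mul_one, ← ofReal_sum, sum_range_sinCoeff]
    simp
  have hsplit : ∑ m ∈ range p, (sinCoeff p m : ℂ) * z ^ m
      = -3 * (p - 1) * (p - 3) * ∑ m ∈ range p, z ^ m
        - 2 * (p ^ 2 - 9 * p + 12) * ∑ m ∈ range p, (m : ℂ) * z ^ m
        + 6 * (p - 3) * ∑ m ∈ range p, (m : ℂ) ^ 2 * z ^ m
        - 4 * ∑ m ∈ range p, (m : ℂ) ^ 3 * z ^ m := by
    simp only [mul_sum, ← sum_sub_distrib, ← sum_add_distrib]
    exact sum_congr rfl fun m _ => by simp only [sinCoeff]; push_cast; ring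
  have h0 := geom_sum_mul z p
  have h1 := sum_range_id_mul_pow_mul_sub_one_sq z p
  have h2 := sum_range_sq_mul_pow_mul_sub_one_pow_three z p
  have h3 := sum_range_pow_three_mul_pow_mul_sub_one_pow_four z p
  rw [hz] at h0 h1 h2 h3
  rw [eq_div_iff (pow_ne_zero 3 (sub_ne_zero.2 hz1.symm))]
  refine mul_right_cancel₀ (pow_ne_zero 4 (sub_ne_zero.2 hz1)) ?_
  linear_combination (1 - z) ^ 3 * (z - 1) ^ 4 * hsplit
    - 3 * (p - 1) * (p - 3) * (1 - z) ^ 3 * (z - 1) ^ 3 * h0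
    - 2 * (p ^ 2 - 9 * p + 12) * (1 - z) ^ 3 * (z - 1) ^ 2 * h1
    + 6 * (p - 3) * (1 - z) ^ 3 * (z - 1) * h2
    - 4 * (1 - z) ^ 3 * h3

theorem sum_range_neg_one_pow_mul_cosCoeff_mul_pow {p : ℕ} (hp : Odd p) {z : ℂ}
    (hz : z ^ p = 1) :
    ∑ m ∈ range p, (-1) ^ m * (cosCoeff p m : ℂ) * z ^ m = 24 * (1 - z) / (1 + z) ^ 4 := by
  set w := -z with hw
  have hwp : w ^ p = -1 := by rw [hw, hp.neg_pow, hz]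
  have hsub : w - 1 ≠ 0 := fun h => by
    rw [sub_eq_zero.1 h, one_pow] at hwp
    norm_num at hwp
  have hsplit : ∑ m ∈ range p, (-1) ^ m * (cosCoeff p m : ℂ) * z ^ m
      = (p - 1) * (p - 3) * (p + 4) * ∑ m ∈ range p, w ^ m
        - 2 * (9 * p - 13) * ∑ m ∈ range p, (m : ℂ) * w ^ m
        - 6 * (p - 3) * ∑ m ∈ range p, (m : ℂ) ^ 2 * w ^ m
        + 4 * ∑ m ∈ range p, (m : ℂ) ^ 3 * w ^ m := by
    simp only [mul_sum, ← sum_sub_distrib, ← sum_add_distrib]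
    exact sum_congr rfl fun m _ => by simp only [hw, cosCoeff, neg_pow z]; push_cast; ring
  have h0 := geom_sum_mul w p
  have h1 := sum_range_id_mul_pow_mul_sub_one_sq w p
  have h2 := sum_range_sq_mul_pow_mul_sub_one_pow_three w p
  have h3 := sum_range_pow_three_mul_pow_mul_sub_one_pow_four w p
  rw [hwp] at h0 h1 h2 h3
  rw [show 1 + z = 1 - w by ring, show 1 - z = 1 + w by ring,
    eq_div_iff (pow_ne_zero 4 (by rwa [← neg_sub, neg_ne_zero]))]
  refine mul_right_cancel₀ (pow_ne_zero 4 hsub) ?_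
  linear_combination (1 - w) ^ 4 * (w - 1) ^ 4 * hsplit
    + (p - 1) * (p - 3) * (p + 4) * (1 - w) ^ 4 * (w - 1) ^ 3 * h0
    - 2 * (9 * p - 13) * (1 - w) ^ 4 * (w - 1) ^ 2 * h1
    - 6 * (p - 3) * (1 - w) ^ 4 * (w - 1) * h2
    + 4 * (1 - w) ^ 4 * h3

theorem IsPrimitiveRoot.sum_range_pow_div_one_sub_pow_three {ζ : ℂ} {p r : ℕ}
    (hζ : IsPrimitiveRoot ζ p) (hr : 0 < r) (hrp : r ≤ p) :
    ∑ j ∈ range p, (ζ ^ j) ^ r / (1 - ζ ^ j) ^ 3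
      = ((sinCoeff p (p - r : ℕ) / 24 : ℝ) : ℂ) := by
  have hp : (p : ℂ) ≠ 0 := by exact_mod_cast (by omega : p ≠ 0)
  calc _ = (24 * (p : ℂ))⁻¹ * ∑ j ∈ range p,
        (ζ ^ j) ^ r * ∑ m ∈ range p, (sinCoeff p m : ℂ) * (ζ ^ j) ^ m := by
        rw [mul_sum]
        refine sum_congr rfl fun j _ => ?_
        rw [sum_range_sinCoeff_mul_pow (by rw [pow_right_comm, hζ.pow_eq_one, one_pow])]
        field_simp
    _ = _ := by
        rw [hζ.sum_range_pow_mul_sum_range _ hr hrp]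
        push_cast
        field_simp

theorem IsPrimitiveRoot.sum_range_pow_mul_one_sub_div_one_add_pow_four {ζ : ℂ} {p r : ℕ}
    (hζ : IsPrimitiveRoot ζ p) (hp : Odd p) (hr : 0 < r) (hrp : r ≤ p) :
    ∑ j ∈ range p, (ζ ^ j) ^ r * (1 - ζ ^ j) / (1 + ζ ^ j) ^ 4
      = (((-1) ^ (p - r) * p * cosCoeff p (p - r : ℕ) / 24 : ℝ) : ℂ) := by
  calc _ = 24⁻¹ * ∑ j ∈ range p,
        (ζ ^ j) ^ r * ∑ m ∈ range p, (-1) ^ m * (cosCoeff p m : ℂ) * (ζ ^ j) ^ m := by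
        rw [mul_sum]
        refine sum_congr rfl fun j _ => ?_
        rw [sum_range_neg_one_pow_mul_cosCoeff_mul_pow hp
          (by rw [pow_right_comm, hζ.pow_eq_one, one_pow])]
        ring
    _ = _ := by
        rw [hζ.sum_range_pow_mul_sum_range (fun m => (-1) ^ m * (cosCoeff p m : ℂ)) hr hrp]
        push_cast
        ring

namespace Complex

theorem one_sub_exp_mul_I_sq (x : ℂ) : 1 - exp (x * I) ^ 2 = -2 * I * sin x * exp (x * I) := by
  rw [exp_mul_I]
  linear_combination sin x ^ 2 * I_sq - sin_sq_add_cos_sq x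

theorem one_add_exp_mul_I_sq (x : ℂ) : 1 + exp (x * I) ^ 2 = 2 * cos x * exp (x * I) := by
  rw [exp_mul_I]
  linear_combination sin x ^ 2 * I_sq - sin_sq_add_cos_sq x

theorem re_neg_I_mul_exp_mul_I_pow_mul_ofReal (x : ℝ) (n : ℕ) (a : ℝ) :
    (-I * exp (x * I) ^ n * a).re = Real.sin (n * x) * a := by
  have : exp (x * I) ^ n = exp ((n * x : ℝ) * I) := by
    rw [← exp_nat_mul]
    push_cast
    ring_nf
  rw [this]
  simp only [mul_re, mul_im, neg_re, neg_im, I_re, I_im, exp_ofReal_mul_I_re, exp_ofReal_mul_I_im,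
    ofReal_re, ofReal_im]
  ring

theorem exp_two_pi_mul_I_div_pow (p j : ℕ) :
    exp (2 * π * I / p) ^ j = exp ((π * j / p : ℝ) * I) ^ 2 := by
  rw [← exp_nat_mul, ← exp_nat_mul]
  push_cast
  ring_nf

end Complex

/-- When `sin x = 0`, both sides are `0`: `exp (x * I) ^ 2 = 1` and division by zero is `0`. -/
theorem sin_odd_mul_mul_sin_zpow_neg_three_eq_re (c : ℕ) (x : ℝ) :
    Real.sin ((2 * c + 1) * x) * Real.sin x ^ (-3 : ℤ)
      = 8 * ((exp (x * I) ^ 2) ^ (c + 2) / (1 - exp (x * I) ^ 2) ^ 3).re := by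
  have hu : exp (x * I) ≠ 0 := exp_ne_zero _
  have key : (exp (x * I) ^ 2) ^ (c + 2) / (1 - exp (x * I) ^ 2) ^ 3
      = -I * exp (x * I) ^ (2 * c + 1) * ((Real.sin x ^ (-3 : ℤ) / 8 : ℝ) : ℂ) := by
    rw [one_sub_exp_mul_I_sq]
    push_cast
    rcases eq_or_ne (sin x) 0 with hs | hs
    · simp [hs]
    · field_simp
      rw [I_pow_four]
      ring
  rw [key, re_neg_I_mul_exp_mul_I_pow_mul_ofReal]
  push_cast
  ring

theorem sin_odd_mul_mul_sin_mul_cos_zpow_neg_four_eq_re (c : ℕ) (x : ℝ) :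
    Real.sin ((2 * c + 1) * x) * Real.sin x * Real.cos x ^ (-4 : ℤ)
      = 8 * ((exp (x * I) ^ 2) ^ (c + 2) * (1 - exp (x * I) ^ 2)
          / (1 + exp (x * I) ^ 2) ^ 4).re := by
  have hu : exp (x * I) ≠ 0 := exp_ne_zero _
  have key : (exp (x * I) ^ 2) ^ (c + 2) * (1 - exp (x * I) ^ 2) / (1 + exp (x * I) ^ 2) ^ 4
      = -I * exp (x * I) ^ (2 * c + 1)
          * ((Real.sin x * Real.cos x ^ (-4 : ℤ) / 8 : ℝ) : ℂ) := by
    rw [one_sub_exp_mul_I_sq, one_add_exp_mul_I_sq]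
    push_cast
    rcases eq_or_ne (cos x) 0 with hc | hc
    · simp [hc]
    · field_simp
      ring
  rw [key, re_neg_I_mul_exp_mul_I_pow_mul_ofReal]
  push_cast
  ring

theorem Real.sin_odd_mul_pi_sub (c : ℕ) (x : ℝ) :
    Real.sin ((2 * c + 1) * (π - x)) = Real.sin ((2 * c + 1) * x) := by
  rw [show (2 * c + 1) * (π - x) = π - (2 * c + 1) * x + c * (2 * π) by ring,
    Real.sin_add_nat_mul_two_pi, Real.sin_pi_sub]

theorem sum_range_two_mul_add_one_of_symm {M : Type*} [AddCommMonoid M] (f : ℕ → M) (d : ℕ)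
    (hf : ∀ j ∈ Icc 1 d, f (2 * d + 1 - j) = f j) :
    ∑ j ∈ range (2 * d + 1), f j = f 0 + 2 • ∑ j ∈ Icc 1 d, f j := by
  have hIcc : ∑ j ∈ Icc 1 d, f j = ∑ i ∈ range d, f (i + 1) := by
    rw [← Ico_add_one_right_eq_Icc, sum_Ico_eq_sum_range]
    simp [add_comm]
  have hreflect : ∑ i ∈ range d, f (d + i + 1) = ∑ i ∈ range d, f (i + 1) := by
    rw [← sum_range_reflect]
    refine sum_congr rfl fun i hi => ?_
    rw [mem_range] at hi
    rw [← hf (i + 1) (mem_Icc.2 ⟨by omega, by omega⟩)]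
    congr 1
    omega
  rw [sum_range_succ', two_mul, sum_range_add, hreflect, hIcc, two_nsmul, add_comm]

theorem sum_Icc_pi_mul_div_eq_half {φ : ℝ → ℝ} (hφ : ∀ x, φ (π - x) = φ x)
    (hφ0 : φ 0 = 0) {p d : ℕ} (hpd : p = 2 * d + 1) :
    ∑ j ∈ Icc 1 d, φ (π * j / p) = (∑ j ∈ range p, φ (π * j / p)) / 2 := by
  subst hpd
  rw [sum_range_two_mul_add_one_of_symm _ d fun j hj => ?_, two_nsmul]
  · simp [hφ0]
  rw [mem_Icc] at hj
  rw [← hφ, Nat.cast_sub (by omega)]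
  congr 1
  field_simp
  ring

theorem Dverl_two_eq {p d c : ℕ} (hpd : p = 2 * d + 1) (hc : c + 2 ≤ p) :
    Dverl 2 c p = p * sinCoeff p (p - c - 2) / 24 := by
  have hsum : ∑ j ∈ range p,
      Real.sin ((2 * c + 1) * (π * j / p)) * Real.sin (π * j / p) ^ (-3 : ℤ)
        = sinCoeff p (p - c - 2) / 3 := by
    simp_rw [sin_odd_mul_mul_sin_zpow_neg_three_eq_re, ← exp_two_pi_mul_I_div_pow]
    rw [← mul_sum, ← re_sum,
      (isPrimitiveRoot_exp p (by omega)).sum_range_pow_div_one_sub_pow_three (by omega) hc,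
      ofReal_re, Nat.cast_sub hc]
    push_cast [← sub_sub]
    ring
  have hterm : ∀ j : ℕ,
      Real.sin (π * j * (2 * c + 1) / p) * Real.sin (π * j / p) ^ (1 - 2 * ((2 : ℕ) : ℤ))
        = Real.sin ((2 * c + 1) * (π * j / p)) * Real.sin (π * j / p) ^ (-3 : ℤ) := fun j => by
    rw [show 1 - 2 * ((2 : ℕ) : ℤ) = -3 by norm_num]
    ring_nf
  rw [Dverl, show (p - 1) / 2 = d by omega, sum_congr rfl fun j _ => hterm j,
    sum_Icc_pi_mul_div_eq_half (φ := fun x => Real.sin ((2 * c + 1) * x) * Real.sin x ^ (-3 : ℤ))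
      (fun x => by simp only [Real.sin_odd_mul_pi_sub, Real.sin_pi_sub]) (by simp) hpd, hsum]
  ring

theorem deltaVerl_two_eq {p d c : ℕ} (hpd : p = 2 * d + 1) (hc : c + 2 ≤ p) :
    deltaVerl 2 c p = -cosCoeff p (p - c - 2) / 24 := by
  have hsum : ∑ j ∈ range p, Real.sin ((2 * c + 1) * (π * j / p)) * Real.sin (π * j / p)
        * Real.cos (π * j / p) ^ (-4 : ℤ)
      = (-1) ^ (p - (c + 2)) * p * cosCoeff p (p - c - 2) / 3 := by
    simp_rw [sin_odd_mul_mul_sin_mul_cos_zpow_neg_four_eq_re, ← exp_two_pi_mul_I_div_pow]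
    rw [← mul_sum, ← re_sum,
      (isPrimitiveRoot_exp p (by omega)).sum_range_pow_mul_one_sub_div_one_add_pow_four ⟨d, hpd⟩
        (by omega) hc,
      ofReal_re, Nat.cast_sub hc]
    push_cast [← sub_sub]
    ring
  have hterm : ∀ j : ℕ, Real.sin (π * j * (2 * c + 1) / p) * Real.sin (π * j / p)
        * Real.cos (π * j / p) ^ (-(2 * ((2 : ℕ) : ℤ)))
      = Real.sin ((2 * c + 1) * (π * j / p)) * Real.sin (π * j / p)
        * Real.cos (π * j / p) ^ (-4 : ℤ) := fun j => by
    rw [show -(2 * ((2 : ℕ) : ℤ)) = -4 by norm_num]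
    ring_nf
  have hsign : (-1 : ℝ) ^ (p - (c + 2)) * (-1) ^ c = -1 := by
    rw [← pow_add, show p - (c + 2) + c = 2 * (d - 1) + 1 by omega, pow_succ, pow_mul]
    norm_num
  have hp : (p : ℝ) ≠ 0 := by exact_mod_cast (by omega : p ≠ 0)
  rw [deltaVerl, show (p - 1) / 2 = d by omega, sum_congr rfl fun j _ => hterm j,
    sum_Icc_pi_mul_div_eq_half
      (φ := fun x => Real.sin ((2 * c + 1) * x) * Real.sin x * Real.cos x ^ (-4 : ℤ))
      (fun x => by simp only [Real.sin_odd_mul_pi_sub, Real.sin_pi_sub, Real.cos_pi_sub,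
        Even.neg_zpow (by decide : Even (-4 : ℤ))]) (by simp) hpd, hsum,
    show (4 : ℝ) ^ (1 - ((2 : ℕ) : ℤ)) = 4⁻¹ by norm_num]
  field_simp
  linear_combination 24 * cosCoeff p (p - c - 2) * hsign

/-- In rank `g = 2`:
`(1/2)·(D_2^{(2c)}(p) + δ_2^{(2c)}(p)) = (1/24)·(c+1)·(p+1)·(p-2c-1)·(p-c)`. -/
theorem stmt18 (p d c : ℕ) (hp : p.Prime) (hp5 : 5 ≤ p) (hd : d = (p - 1) / 2)
    (hc : c ≤ d - 1) :
    1 / 2 * (Dverl 2 c p + deltaVerl 2 c p) =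
      1 / 24 * ((c : ℝ) + 1) * ((p : ℝ) + 1) * ((p : ℝ) - 2 * c - 1) * ((p : ℝ) - c) := by
  obtain ⟨k, hk⟩ := hp.odd_of_ne_two (by omega)
  have hpd : p = 2 * d + 1 := by omega
  have hc2 : c + 2 ≤ p := by omega
  rw [Dverl_two_eq hpd hc2, deltaVerl_two_eq hpd hc2, sinCoeff, cosCoeff]
  ring
end

section
/- Let p ≥ 5 be a prime, d = (p−1)/2, and let c be an integer with 1 ≤ c ≤ d−1. Then (1/2)·(D_2^{(2c)}(p) − δ_2^{(2c)}(p)) = (1/24)·c·(p−1)·(p−2c−1)·(p−c−1). -/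
/-!
Write `x_j = πj/p` for `1 ≤ j ≤ (p-1)/2`. Then `D_2^{(2c)}` is a multiple of
`Σ_j sin((2c+1)x_j)/sin(x_j)^3` and, since `2 sin((2c+1)x) sin x = cos(2cx) - cos((2c+2)x)`,
`δ_2^{(2c)}` is a multiple of the difference of the moments `Σ_j cos(m x_j)/cos(x_j)^4` at
`m = 2c` and `m = 2c+2`. By the addition formulas, the sum (for cosine denominators) or the
difference (for sine denominators) of such moments at `m + 2` and `m` is `±2` times a moment at
`m + 1` with one power less in the denominator. Starting from the Dirichlet-kernel evaluation
`Σ_j cos(2k x_j) = -1/2` for `p ∤ k`, every moment is computed by induction on `m` up to its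
value at `m = 0`. That value is forced by periodicity: `cos(2p x_j) = 1` makes the moments at
`m = 2p` and `m = 0` agree, which for odd `p` determines the solution of the alternating
cosine-denominator recurrences; and `sin(p x_j) = 0` gives `Σ_j 1/sin(x_j)^2 = (p²-1)/6`.
-/

open Finset Real

theorem sin_mul_one_add_two_mul_sum_cos (n : ℕ) (y : ℝ) :
    sin y * (1 + 2 * ∑ j ∈ Icc 1 n, cos (2 * j * y)) = sin ((2 * n + 1) * y) := by
  induction n with
  | zero => simp
  | succ n ih =>
    rw [sum_Icc_succ_top (by omega), mul_add 2, ← add_assoc, mul_add, ih]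
    push_cast
    rw [show (2 * (n + 1) + 1) * y = 2 * (n + 1) * y + y by ring,
      show (2 * n + 1) * y = 2 * (n + 1) * y - y by ring, sin_add, sin_sub]
    ring

theorem cos_pos_of_mem_Ioo_zero_pi_div_two {x : ℝ} (hx : x ∈ Set.Ioo 0 (π / 2)) : 0 < cos x :=
  cos_pos_of_mem_Ioo ⟨by linarith [hx.1, pi_pos], hx.2⟩

theorem sin_pos_of_mem_Ioo_zero_pi_div_two {x : ℝ} (hx : x ∈ Set.Ioo 0 (π / 2)) : 0 < sin x :=
  sin_pos_of_pos_of_lt_pi hx.1 (by linarith [hx.2, pi_pos])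

noncomputable def nodeSum (p : ℕ) (f : ℝ → ℝ) : ℝ :=
  ∑ j ∈ Icc 1 ((p - 1) / 2), f (π * j / p)

section NodeSum

variable {p : ℕ}

theorem node_mem_Ioo {j : ℕ} (hj : j ∈ Icc 1 ((p - 1) / 2)) :
    π * j / p ∈ Set.Ioo 0 (π / 2) := by
  rw [mem_Icc] at hj
  have hj₀ : (0 : ℝ) < j := by exact_mod_cast hj.1
  have hjp : 2 * (j : ℝ) < p := by exact_mod_cast (by omega : 2 * j < p)
  have hp₀ : (0 : ℝ) < p := by linarith
  refine ⟨by positivity, ?_⟩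
  rw [div_lt_div_iff₀ hp₀ two_pos]
  nlinarith [pi_pos]

theorem nodeSum_congr {f g : ℝ → ℝ} (h : ∀ x ∈ Set.Ioo 0 (π / 2), f x = g x) :
    nodeSum p f = nodeSum p g :=
  sum_congr rfl fun _ hj => h _ (node_mem_Ioo hj)

theorem nodeSum_add (f g : ℝ → ℝ) :
    nodeSum p f + nodeSum p g = nodeSum p (fun x => f x + g x) :=
  sum_add_distrib.symm

theorem nodeSum_sub (f g : ℝ → ℝ) :
    nodeSum p f - nodeSum p g = nodeSum p (fun x => f x - g x) :=
  (sum_sub_distrib _ _).symm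

theorem mul_nodeSum (a : ℝ) (f : ℝ → ℝ) : a * nodeSum p f = nodeSum p (fun x => a * f x) :=
  mul_sum _ _ _

theorem nodeSum_one (hp : Odd p) : nodeSum p (fun _ => 1) = ((p : ℝ) - 1) / 2 := by
  obtain ⟨m, rfl⟩ := hp
  simp [nodeSum]

theorem nodeSum_cos_two_mul (hp : Odd p) {k : ℕ} (hk₀ : 1 ≤ k) (hk : k < p) :
    nodeSum p (fun x => cos (2 * k * x)) = -1 / 2 := by
  obtain ⟨m, rfl⟩ := hp
  set y := π * k / (2 * m + 1) with hy
  have hsin : 0 < sin y := by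
    have hk' : (k : ℝ) < 2 * m + 1 := by exact_mod_cast hk
    have : (1 : ℝ) ≤ k := by exact_mod_cast hk₀
    apply sin_pos_of_pos_of_lt_pi (by positivity)
    rw [div_lt_iff₀ (by positivity)]
    nlinarith [pi_pos]
  have hdir := sin_mul_one_add_two_mul_sum_cos m y
  rw [show (2 * m + 1) * y = k * π by rw [hy]; field_simp, sin_nat_mul_pi] at hdir
  have hsum : ∑ j ∈ Icc 1 m, cos (2 * j * y) = -1 / 2 := by
    have := (mul_eq_zero.1 hdir).resolve_left hsin.ne'
    linarith
  simp only [nodeSum, show (2 * m + 1 - 1) / 2 = m by omega]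
  rw [← hsum]
  refine sum_congr rfl fun j _ => congrArg cos ?_
  push_cast
  ring

end NodeSum

noncomputable def cosDivCosPow (p n m : ℕ) : ℝ := nodeSum p fun x => cos (m * x) / cos x ^ n

noncomputable def sinDivSinPow (p n m : ℕ) : ℝ := nodeSum p fun x => sin (m * x) / sin x ^ n

noncomputable def cosDivSinPow (p n m : ℕ) : ℝ := nodeSum p fun x => cos (m * x) / sin x ^ n

section Recurrences

variable (p n m : ℕ)

theorem cosDivCosPow_add_two :
    cosDivCosPow p (n + 1) (m + 2) + cosDivCosPow p (n + 1) m = 2 * cosDivCosPow p n (m + 1) := by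
  rw [cosDivCosPow, cosDivCosPow, cosDivCosPow, nodeSum_add, mul_nodeSum]
  refine nodeSum_congr fun x hx => ?_
  have hcos : cos x ≠ 0 := (cos_pos_of_mem_Ioo_zero_pi_div_two hx).ne'
  push_cast
  rw [show (m + 2 : ℝ) * x = (m + 1) * x + x by ring,
    show (m : ℝ) * x = (m + 1) * x - x by ring, cos_add, cos_sub, pow_succ]
  field_simp
  ring

theorem sinDivSinPow_add_two :
    sinDivSinPow p (n + 1) (m + 2) - sinDivSinPow p (n + 1) m = 2 * cosDivSinPow p n (m + 1) := by
  simp only [sinDivSinPow, cosDivSinPow, nodeSum_sub, mul_nodeSum]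
  refine nodeSum_congr fun x hx => ?_
  have hsin : sin x ≠ 0 := (sin_pos_of_mem_Ioo_zero_pi_div_two hx).ne'
  push_cast
  rw [show (m + 2 : ℝ) * x = (m + 1) * x + x by ring,
    show (m : ℝ) * x = (m + 1) * x - x by ring, sin_add, sin_sub, pow_succ]
  field_simp
  ring

theorem cosDivSinPow_add_two :
    cosDivSinPow p (n + 1) (m + 2) - cosDivSinPow p (n + 1) m = -2 * sinDivSinPow p n (m + 1) := by
  simp only [sinDivSinPow, cosDivSinPow, nodeSum_sub, mul_nodeSum]
  refine nodeSum_congr fun x hx => ?_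
  have hsin : sin x ≠ 0 := (sin_pos_of_mem_Ioo_zero_pi_div_two hx).ne'
  push_cast
  rw [show (m + 2 : ℝ) * x = (m + 1) * x + x by ring,
    show (m : ℝ) * x = (m + 1) * x - x by ring, cos_add, cos_sub, pow_succ]
  field_simp
  ring

end Recurrences

section ClosedForms

variable {p : ℕ}

theorem cosDivCosPow_two_mul_self (n : ℕ) : cosDivCosPow p n (2 * p) = cosDivCosPow p n 0 := by
  unfold cosDivCosPow nodeSum
  refine sum_congr rfl fun j hj => ?_
  have hp : (p : ℝ) ≠ 0 := by
    rw [mem_Icc] at hj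
    exact_mod_cast (by omega : p ≠ 0)
  dsimp only
  rw [show ((2 * p : ℕ) : ℝ) * (π * j / p) = j * (2 * π) by push_cast; field_simp,
    cos_nat_mul_two_pi]
  simp

theorem sinDivSinPow_self (n : ℕ) : sinDivSinPow p n p = 0 := by
  unfold sinDivSinPow nodeSum
  refine sum_eq_zero fun j hj => ?_
  have hp : (p : ℝ) ≠ 0 := by
    rw [mem_Icc] at hj
    exact_mod_cast (by omega : p ≠ 0)
  dsimp only
  rw [show (p : ℝ) * (π * j / p) = j * π by field_simp, sin_nat_mul_pi, zero_div]

theorem cosDivCosPow_zero_two_mul (hp : Odd p) {k : ℕ} (hk₀ : 1 ≤ k) (hk : k < p) :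
    cosDivCosPow p 0 (2 * k) = -1 / 2 := by
  simpa [cosDivCosPow] using nodeSum_cos_two_mul hp hk₀ hk

theorem cosDivCosPow_one_odd (hp : Odd p) {k : ℕ} (hk : k < p) :
    cosDivCosPow p 1 (2 * k + 1) = ((-1) ^ k * p - 1) / 2 := by
  induction k with
  | zero =>
    rw [pow_zero, one_mul, ← nodeSum_one hp]
    refine nodeSum_congr fun x hx => ?_
    have hcos : cos x ≠ 0 := (cos_pos_of_mem_Ioo_zero_pi_div_two hx).ne'
    simp [hcos]
  | succ k ih =>
    have h := cosDivCosPow_add_two p 0 (2 * k + 1)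
    rw [show 2 * k + 1 + 1 = 2 * (k + 1) by ring, cosDivCosPow_zero_two_mul hp (by omega) hk,
      ih (by omega)] at h
    rw [show 2 * (k + 1) + 1 = 2 * k + 1 + 2 by ring, pow_succ (-1 : ℝ) k]
    linear_combination h

theorem cosDivCosPow_two_even_eq (hp : Odd p) {k : ℕ} (hk : k ≤ p) :
    cosDivCosPow p 2 (2 * k) = (-1) ^ k * (cosDivCosPow p 2 0 + 1 / 2 - p * k) - 1 / 2 := by
  induction k with
  | zero => simp
  | succ k ih =>
    have h := cosDivCosPow_add_two p 1 (2 * k)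
    rw [cosDivCosPow_one_odd hp (by omega), ih (by omega)] at h
    rw [show 2 * (k + 1) = 2 * k + 2 by ring, pow_succ (-1 : ℝ) k]
    push_cast
    linear_combination h

theorem cosDivCosPow_two_even (hp : Odd p) {k : ℕ} (hk : k ≤ p) :
    cosDivCosPow p 2 (2 * k) = ((-1) ^ k * (p ^ 2 - 2 * p * k) - 1) / 2 := by
  have h₀ : cosDivCosPow p 2 0 = ((p : ℝ) ^ 2 - 1) / 2 := by
    have h := cosDivCosPow_two_even_eq hp le_rfl
    rw [cosDivCosPow_two_mul_self, hp.neg_one_pow] at h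
    linarith
  rw [cosDivCosPow_two_even_eq hp hk, h₀]
  ring

theorem cosDivCosPow_three_odd (hp : Odd p) {k : ℕ} (hk : k ≤ p) :
    cosDivCosPow p 3 (2 * k + 1) =
      ((-1) ^ k * (p ^ 2 + 2 * p * (p - 1) * k - 2 * p * k ^ 2) - 1) / 2 := by
  induction k with
  | zero =>
    have h₁ : cosDivCosPow p 3 1 = cosDivCosPow p 2 0 := nodeSum_congr fun x hx => by
      have hcos : cos x ≠ 0 := (cos_pos_of_mem_Ioo_zero_pi_div_two hx).ne'
      field_simp
      simp
    have h := cosDivCosPow_two_even hp (Nat.zero_le p)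
    rw [mul_zero] at h
    rw [mul_zero, zero_add, h₁, h]
    ring
  | succ k ih =>
    have h := cosDivCosPow_add_two p 2 (2 * k + 1)
    rw [show 2 * k + 1 + 1 = 2 * (k + 1) by ring, cosDivCosPow_two_even hp hk,
      ih (by omega)] at h
    rw [show 2 * (k + 1) + 1 = 2 * k + 1 + 2 by ring, pow_succ (-1 : ℝ) k]
    push_cast at h ⊢
    linear_combination h

theorem cosDivCosPow_four_even_eq (hp : Odd p) {k : ℕ} (hk : k ≤ p) :
    cosDivCosPow p 4 (2 * k) =
      (-1) ^ k * (cosDivCosPow p 4 0 + 1 / 2 - (p ^ 2 * k ^ 2 - 2 * p / 3 * (k ^ 3 - k)))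
        - 1 / 2 := by
  induction k with
  | zero => simp
  | succ k ih =>
    have h := cosDivCosPow_add_two p 3 (2 * k)
    rw [cosDivCosPow_three_odd hp (by omega), ih (by omega)] at h
    rw [show 2 * (k + 1) = 2 * k + 2 by ring, pow_succ (-1 : ℝ) k]
    push_cast
    linear_combination h

theorem cosDivCosPow_four_even (hp : Odd p) {k : ℕ} (hk : k ≤ p) :
    cosDivCosPow p 4 (2 * k) =
      ((-1) ^ k * (p ^ 2 * (p ^ 2 + 2) / 3 - 2 * p ^ 2 * k ^ 2 + 4 * p / 3 * (k ^ 3 - k)) - 1)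
        / 2 := by
  have h₀ : cosDivCosPow p 4 0 = (p : ℝ) ^ 2 * (p ^ 2 + 2) / 6 - 1 / 2 := by
    have h := cosDivCosPow_four_even_eq hp le_rfl
    rw [cosDivCosPow_two_mul_self, hp.neg_one_pow] at h
    linarith
  rw [cosDivCosPow_four_even_eq hp hk, h₀]
  ring

theorem sinDivSinPow_one_odd (hp : Odd p) {c : ℕ} (hc : c < p) :
    sinDivSinPow p 1 (2 * c + 1) = ((p : ℝ) - 1) / 2 - c := by
  induction c with
  | zero =>
    rw [Nat.cast_zero, sub_zero, ← nodeSum_one hp]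
    refine nodeSum_congr fun x hx => ?_
    have hsin : sin x ≠ 0 := (sin_pos_of_mem_Ioo_zero_pi_div_two hx).ne'
    simp [hsin]
  | succ c ih =>
    have h := sinDivSinPow_add_two p 0 (2 * c + 1)
    have hcos : cosDivSinPow p 0 (2 * (c + 1)) = -1 / 2 := by
      simpa [cosDivSinPow] using nodeSum_cos_two_mul hp (Nat.succ_pos c) hc
    rw [show 2 * c + 1 + 1 = 2 * (c + 1) by ring, hcos, ih (by omega)] at h
    rw [show 2 * (c + 1) + 1 = 2 * c + 1 + 2 by ring]
    push_cast
    linear_combination h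

theorem cosDivSinPow_two_even_eq (hp : Odd p) {k : ℕ} (hk : k ≤ p) :
    cosDivSinPow p 2 (2 * k) = cosDivSinPow p 2 0 - k * (p - k) := by
  induction k with
  | zero => simp
  | succ k ih =>
    have h := cosDivSinPow_add_two p 1 (2 * k)
    rw [sinDivSinPow_one_odd hp (by omega), ih (by omega)] at h
    rw [show 2 * (k + 1) = 2 * k + 2 by ring]
    push_cast
    linear_combination h

theorem sinDivSinPow_three_odd_eq (hp : Odd p) {c : ℕ} (hc : c ≤ p) :
    sinDivSinPow p 3 (2 * c + 1) =
      (2 * c + 1) * cosDivSinPow p 2 0 - p * c * (c + 1) + c * (c + 1) * (2 * c + 1) / 3 := by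
  induction c with
  | zero =>
    simp only [mul_zero, zero_add, Nat.cast_zero, one_mul, add_zero, zero_mul, sub_zero,
      zero_div]
    refine nodeSum_congr fun x hx => ?_
    have hsin : sin x ≠ 0 := (sin_pos_of_mem_Ioo_zero_pi_div_two hx).ne'
    field_simp
    simp
  | succ c ih =>
    have h := sinDivSinPow_add_two p 2 (2 * c + 1)
    rw [show 2 * c + 1 + 1 = 2 * (c + 1) by ring, cosDivSinPow_two_even_eq hp hc,
      ih (by omega)] at h
    rw [show 2 * (c + 1) + 1 = 2 * c + 1 + 2 by ring]
    push_cast at h ⊢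
    linear_combination h

theorem cosDivSinPow_two_zero (hp : Odd p) : cosDivSinPow p 2 0 = ((p : ℝ) ^ 2 - 1) / 6 := by
  obtain ⟨d, rfl⟩ := hp
  have h := sinDivSinPow_three_odd_eq (odd_two_mul_add_one d) (c := d) (by omega)
  rw [sinDivSinPow_self] at h
  push_cast at h ⊢
  apply mul_left_cancel₀ (show (2 * d + 1 : ℝ) ≠ 0 by positivity)
  linear_combination -h

theorem sinDivSinPow_three_odd (hp : Odd p) {c : ℕ} (hc : c ≤ p) :
    sinDivSinPow p 3 (2 * c + 1) =
      (2 * c + 1) * (p ^ 2 - 1) / 6 - p * c * (c + 1) + c * (c + 1) * (2 * c + 1) / 3 := by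
  rw [sinDivSinPow_three_odd_eq hp hc, cosDivSinPow_two_zero hp]
  ring

end ClosedForms

theorem Dverl_two (c p : ℕ) : Dverl 2 c p = p / 4 * sinDivSinPow p 3 (2 * c + 1) := by
  rw [Dverl, sinDivSinPow, nodeSum, pow_one]
  congr 1
  refine sum_congr rfl fun j _ => ?_
  rw [show (1 - 2 * ((2 : ℕ) : ℤ)) = -((3 : ℕ) : ℤ) by norm_num, zpow_neg, zpow_natCast]
  push_cast
  ring_nf

theorem deltaVerl_two (c p : ℕ) :
    deltaVerl 2 c p =
      (-1) ^ c / (8 * p) * (cosDivCosPow p 4 (2 * c) - cosDivCosPow p 4 (2 * c + 2)) := by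
  rw [deltaVerl, cosDivCosPow, cosDivCosPow, nodeSum_sub]
  unfold nodeSum
  rw [mul_sum, mul_sum]
  refine sum_congr rfl fun j _ => ?_
  set x := π * j / p
  rw [show (-(2 * ((2 : ℕ) : ℤ))) = -((4 : ℕ) : ℤ) by norm_num, zpow_neg, zpow_natCast,
    show π * j * (2 * c + 1) / p = (2 * c + 1) * x by ring]
  push_cast
  rw [show (2 * c + 2 : ℝ) * x = (2 * c + 1) * x + x by ring,
    show (2 * c : ℝ) * x = (2 * c + 1) * x - x by ring, cos_add, cos_sub]
  norm_num
  ring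

theorem stmt19_general (p d c : ℕ) (hp : p.Prime) (hp5 : 5 ≤ p) (hd : d = (p - 1) / 2)
    (hc : c ≤ d - 1) :
    1 / 2 * (Dverl 2 c p - deltaVerl 2 c p) =
      1 / 24 * (c : ℝ) * ((p : ℝ) - 1) * ((p : ℝ) - 2 * c - 1) * ((p : ℝ) - c - 1) := by
  have hodd : Odd p := hp.odd_of_ne_two (by omega)
  rw [Dverl_two, deltaVerl_two, sinDivSinPow_three_odd hodd (by omega),
    cosDivCosPow_four_even hodd (by omega), show 2 * c + 2 = 2 * (c + 1) by ring,
    cosDivCosPow_four_even hodd (by omega), pow_succ (-1 : ℝ) c]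
  push_cast
  rcases neg_one_pow_eq_or ℝ c with h | h <;> rw [h] <;> field_simp <;> ring

/-- In rank `g = 2`:
`(1/2)·(D_2^{(2c)}(p) - δ_2^{(2c)}(p)) = (1/24)·c·(p-1)·(p-2c-1)·(p-c-1)`. -/
theorem stmt19 (p d c : ℕ) (hp : p.Prime) (hp5 : 5 ≤ p) (hd : d = (p - 1) / 2)
    (hc1 : 1 ≤ c) (hc : c ≤ d - 1) :
    1 / 2 * (Dverl 2 c p - deltaVerl 2 c p) =
      1 / 24 * (c : ℝ) * ((p : ℝ) - 1) * ((p : ℝ) - 2 * c - 1) * ((p : ℝ) - c - 1) :=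
  stmt19_general p d c hp hp5 hd hc
end
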